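/- arXiv:2104.02048 — 6 statements merged into one kernel-verified Lean document; each statement's English description precedes it below -/
import Mathlib

section
/- Let T be large, Q = (log T)^{C_0} for a positive constant C_0, and let L satisfy (e^2 Q)^{L/2} ≤ T. For any primes p_1, ..., p_ℓ ≤ Q with ℓ ≤ L, the average (1/T)∫_T^{2T} ∏_{j=1}^ℓ cos(t log p_j) dt equals E(∏_{j=1}^ℓ cos θ_{p_j}) + O(e^{-L}), where {θ_p} are independent random variables uniformly distributed on [0, 2π] indexed by the primes, and the expectation on the right is over this product measure. -/
open MeasureTheory ProbabilityTheory Real Finset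

/-!
Expanding `∏ cos x_j = 2^{-ℓ} ∑_A cos (∑_{j ∈ A} x_j - ∑_{j ∉ A} x_j)` reduces both sides to
single cosines. For a sign pattern `A` put `a = ∏_{j ∈ A} p_j` and `b = ∏_{j ∉ A} p_j`. If `a = b`,
unique factorisation makes both cosines identically `1`. Otherwise some prime occurs in `a / b`
with a nonzero exponent `c`, so the expectation vanishes because `E e^{i c θ} = 0`, while the time
average is at most `2 / (T |log a - log b|) ≤ 4 √(ab) / T ≤ 4 Q^{L/2} / T ≤ 4 e^{-L}`.
-/

theorem prod_cos_eq_sum_powerset {ι : Type*} [DecidableEq ι] (s : Finset ι) (x : ι → ℝ) :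
    ∏ j ∈ s, cos (x j) =
      2⁻¹ ^ #s * ∑ A ∈ s.powerset, cos (∑ j ∈ A, x j - ∑ j ∈ s \ A, x j) := by
  have hexp : ((∏ j ∈ s, cos (x j) : ℝ) : ℂ) =
      ((2⁻¹ ^ #s : ℝ) : ℂ) * ∑ A ∈ s.powerset,
        Complex.exp (↑(∑ j ∈ A, x j - ∑ j ∈ s \ A, x j) * Complex.I) := by
    calc ((∏ j ∈ s, cos (x j) : ℝ) : ℂ)
        = ∏ j ∈ s,
            2⁻¹ * (Complex.exp (x j * Complex.I) + Complex.exp (-(x j) * Complex.I)) := by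
          push_cast
          refine prod_congr rfl fun j _ => ?_
          rw [Complex.cos, neg_mul]
          ring
      _ = 2⁻¹ ^ #s * ∑ A ∈ s.powerset, (∏ j ∈ A, Complex.exp (x j * Complex.I)) *
            ∏ j ∈ s \ A, Complex.exp (-(x j) * Complex.I) := by
          rw [prod_mul_distrib, prod_const, prod_add]
      _ = _ := by
          push_cast
          congr 1
          refine sum_congr rfl fun A _ => ?_
          rw [← Complex.exp_sum, ← Complex.exp_sum, ← Complex.exp_add, sub_mul, sum_mul, sum_mul,
            sub_eq_add_neg, ← sum_neg_distrib]
          simp only [neg_mul, sum_neg_distrib]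
  simpa only [Complex.re_ofReal_mul, Complex.ofReal_re, Complex.re_sum,
    Complex.exp_ofReal_mul_I_re] using congrArg Complex.re hexp

theorem abs_intervalIntegral_cos_mul_le (a b : ℝ) {l : ℝ} (hl : l ≠ 0) :
    |∫ t in a..b, cos (t * l)| ≤ 2 / |l| := by
  rw [intervalIntegral.integral_comp_mul_right cos hl, integral_cos, smul_eq_mul, abs_mul,
    abs_inv, ← div_eq_inv_mul]
  gcongr
  exact (abs_sub _ _).trans (by linarith [abs_sin_le_one (b * l), abs_sin_le_one (a * l)])

theorem inv_two_mul_le_log_sub {a b : ℕ} (hb : 0 < b) (hba : b < a) :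
    (2 * b : ℝ)⁻¹ ≤ log a - log b := by
  have hb' : (1 : ℝ) ≤ b := by exact_mod_cast hb
  have hba' : (b : ℝ) + 1 ≤ a := by exact_mod_cast hba
  have ha' : (0 : ℝ) < a := by linarith
  calc (2 * b : ℝ)⁻¹ ≤ 1 - ((a : ℝ) / b)⁻¹ := by
        rw [inv_div, one_sub_div ha'.ne', inv_le_iff_one_le_mul₀ (by positivity),
          div_mul_eq_mul_div, le_div_iff₀ ha']
        nlinarith
    _ ≤ log (a / b) := one_sub_inv_le_log_of_pos (by positivity)
    _ = log a - log b := log_div ha'.ne' (by positivity)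

theorem inv_two_mul_sqrt_le_abs_log_sub {a b : ℕ} (ha : 0 < a) (hb : 0 < b) (hab : a ≠ b) :
    (2 * √(a * b) : ℝ)⁻¹ ≤ |log a - log b| := by
  wlog hba : b < a generalizing a b
  · rw [abs_sub_comm, mul_comm (a : ℝ)]
    exact this hb ha hab.symm (lt_of_le_of_ne (not_lt.1 hba) hab)
  calc (2 * √(a * b) : ℝ)⁻¹ ≤ (2 * b : ℝ)⁻¹ := by
        gcongr
        exact le_sqrt_of_sq_le (by rw [sq]; gcongr)
    _ ≤ log a - log b := inv_two_mul_le_log_sub hb hba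
    _ ≤ |log a - log b| := le_abs_self _

theorem abs_average_cos_mul_log_sub_le {T : ℝ} (hT : 0 < T) {a b : ℕ} (ha : 0 < a) (hb : 0 < b)
    (hab : a ≠ b) :
    |(1 / T) * ∫ t in T..2 * T, cos (t * (log a - log b))| ≤ 4 * √(a * b) / T := by
  have hgap := inv_two_mul_sqrt_le_abs_log_sub ha hb hab
  have hl : log a - log b ≠ 0 := abs_pos.1 ((inv_pos.2 (by positivity)).trans_le hgap)
  calc |(1 / T) * ∫ t in T..2 * T, cos (t * (log a - log b))|
      ≤ (1 / T) * (2 * |log a - log b|⁻¹) := by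
        rw [abs_mul, abs_of_pos (by positivity), ← div_eq_mul_inv]
        gcongr
        exact abs_intervalIntegral_cos_mul_le _ _ hl
    _ ≤ (1 / T) * (2 * (2 * √(a * b))) := by
        gcongr
        exact inv_le_of_inv_le₀ (by positivity) hgap
    _ = 4 * √(a * b) / T := by ring

theorem integral_exp_int_mul_mul_I_eq_zero {Ω : Type*} [MeasurableSpace Ω] {μ : Measure Ω}
    {X : Ω → ℝ} (hX : Measurable X)
    (hunif : μ.map X = (ENNReal.ofReal (2 * π))⁻¹ • volume.restrict (Set.Icc 0 (2 * π)))
    {c : ℤ} (hc : c ≠ 0) :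
    ∫ ω, Complex.exp (c * X ω * Complex.I) ∂μ = 0 := by
  have hcI : (c * Complex.I : ℂ) ≠ 0 := mul_ne_zero (by exact_mod_cast hc) Complex.I_ne_zero
  have hcirc : ∫ x in (0 : ℝ)..2 * π, Complex.exp (c * Complex.I * x) = 0 := by
    rw [integral_exp_mul_complex hcI, div_eq_zero_iff, sub_eq_zero]
    left
    push_cast
    rw [mul_zero, Complex.exp_zero, ← Complex.exp_int_mul_two_pi_mul_I c]
    ring_nf
  simp only [mul_right_comm _ _ Complex.I]
  rw [← integral_map (f := fun x : ℝ => Complex.exp (c * Complex.I * x)) hX.aemeasurable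
    (by fun_prop), hunif, integral_smul_measure, integral_Icc_eq_integral_Ioc,
    ← intervalIntegral.integral_of_le (by positivity), hcirc, smul_zero]

theorem integral_cos_sum_int_mul_eq_zero {Ω ι : Type*} [MeasurableSpace Ω] {μ : Measure Ω}
    [Fintype ι] {θ : ι → Ω → ℝ} (hmeas : ∀ i, Measurable (θ i)) (hindep : iIndepFun θ μ)
    {i₀ : ι} (hunif : μ.map (θ i₀) =
      (ENNReal.ofReal (2 * π))⁻¹ • volume.restrict (Set.Icc 0 (2 * π)))
    {c : ι → ℤ} (hc : c i₀ ≠ 0) :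
    ∫ ω, cos (∑ i, c i * θ i ω) ∂μ = 0 := by
  have := hindep.isProbabilityMeasure
  have hchar : ∫ ω, Complex.exp (↑(∑ i, c i * θ i ω) * Complex.I) ∂μ = 0 := by
    simp only [Complex.ofReal_sum, Complex.ofReal_mul, Complex.ofReal_intCast, sum_mul,
      Complex.exp_sum]
    rw [hindep.integral_fun_prod_comp (X := θ)
      (f := fun i x => Complex.exp (c i * x * Complex.I))
      (fun i => (hmeas i).aemeasurable) (fun i => by fun_prop)]
    exact prod_eq_zero (mem_univ i₀) (integral_exp_int_mul_mul_I_eq_zero (hmeas i₀) hunif hc)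
  have hint : Integrable (fun ω => Complex.exp (↑(∑ i, c i * θ i ω) * Complex.I)) μ :=
    .of_bound (by fun_prop) 1 (ae_of_all _ fun ω => (Complex.norm_exp_ofReal_mul_I _).le)
  calc ∫ ω, cos (∑ i, c i * θ i ω) ∂μ
      = ∫ ω, RCLike.re (Complex.exp (↑(∑ i, c i * θ i ω) * Complex.I)) ∂μ := by
        simp only [RCLike.re_to_complex, Complex.exp_ofReal_mul_I_re]
    _ = 0 := by rw [integral_re hint, hchar, map_zero]

section PrimeProducts

variable {ι : Type*} {p : ι → ℕ}

theorem sum_comp_eq_sum_factorization_smul {M : Type*} [AddCommMonoid M] {s : Finset ι}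
    (hp : ∀ j ∈ s, (p j).Prime) {S : Finset ℕ} (hS : ∀ j ∈ s, p j ∈ S) (g : ℕ → M) :
    ∑ j ∈ s, g (p j) = ∑ q ∈ S, (∏ j ∈ s, p j).factorization q • g q := by
  rw [Nat.factorization_prod fun j hj => (hp j hj).ne_zero]
  simp only [Finsupp.finsetSum_apply, sum_smul]
  rw [sum_comm]
  refine sum_congr rfl fun j hj => ?_
  simp [(hp j hj).factorization, Finsupp.single_apply, hS j hj]

theorem mem_primeFactors_prod {s : Finset ι} (hp : ∀ j ∈ s, (p j).Prime) {j : ι}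
    (hj : j ∈ s) :
    p j ∈ (∏ i ∈ s, p i).primeFactors :=
  Nat.mem_primeFactors.2 ⟨hp j hj, dvd_prod_of_mem p hj,
    (prod_pos fun i hi => (hp i hi).pos).ne'⟩

theorem sum_comp_eq_of_prod_eq {M : Type*} [AddCommMonoid M] (hp : ∀ j, (p j).Prime)
    {A B : Finset ι} (h : ∏ j ∈ A, p j = ∏ j ∈ B, p j) (g : ℕ → M) :
    ∑ j ∈ A, g (p j) = ∑ j ∈ B, g (p j) := by
  rw [sum_comp_eq_sum_factorization_smul (fun j _ => hp j)
      (fun j hj => mem_primeFactors_prod (fun j _ => hp j) hj),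
    sum_comp_eq_sum_factorization_smul (fun j _ => hp j)
      (fun j hj => h ▸ mem_primeFactors_prod (fun j _ => hp j) hj), h]

theorem integral_cos_sum_sub_sum_eq_zero {Ω : Type*} [MeasurableSpace Ω] {μ : Measure Ω}
    {θ : ℕ → Ω → ℝ} (hmeas : ∀ q, Measurable (θ q)) (hindep : iIndepFun θ μ)
    (hunif : ∀ q, μ.map (θ q) =
      (ENNReal.ofReal (2 * π))⁻¹ • volume.restrict (Set.Icc 0 (2 * π)))
    (hp : ∀ j, (p j).Prime) {A B : Finset ι} (h : ∏ j ∈ A, p j ≠ ∏ j ∈ B, p j) :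
    ∫ ω, cos (∑ j ∈ A, θ (p j) ω - ∑ j ∈ B, θ (p j) ω) ∂μ = 0 := by
  set a := ∏ j ∈ A, p j
  set b := ∏ j ∈ B, p j
  set S := a.primeFactors ∪ b.primeFactors
  obtain ⟨q₀, hq₀S, hq₀⟩ : ∃ q ∈ S, a.factorization q ≠ b.factorization q := by
    by_contra! hS
    refine h (Nat.eq_of_factorization_eq (prod_pos fun j _ => (hp j).pos).ne'
      (prod_pos fun j _ => (hp j).pos).ne' fun q => ?_)
    by_cases hq : q ∈ S
    · exact hS q hq
    · simp only [S, mem_union, not_or, ← Nat.support_factorization,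
        Finsupp.notMem_support_iff] at hq
      rw [hq.1, hq.2]
  have hsum : ∀ ω, ∑ j ∈ A, θ (p j) ω - ∑ j ∈ B, θ (p j) ω =
      ∑ q : S, (((a.factorization q : ℤ) - b.factorization q : ℤ) : ℝ) * θ q ω := by
    intro ω
    rw [sum_comp_eq_sum_factorization_smul (fun j _ => hp j) (S := S)
        (fun j hj => mem_union_left _ (mem_primeFactors_prod (fun j _ => hp j) hj)) (θ · ω),
      sum_comp_eq_sum_factorization_smul (fun j _ => hp j) (S := S)
        (fun j hj => mem_union_right _ (mem_primeFactors_prod (fun j _ => hp j) hj)) (θ · ω),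
      ← sum_sub_distrib, ← sum_coe_sort S]
    push_cast
    simp only [nsmul_eq_mul, sub_mul]
    rfl
  simp only [hsum]
  exact integral_cos_sum_int_mul_eq_zero (θ := fun q : S => θ q) (fun q => hmeas q)
    (hindep.precomp Subtype.val_injective) (i₀ := ⟨q₀, hq₀S⟩) (hunif q₀)
    (sub_ne_zero.2 (by exact_mod_cast hq₀))

theorem abs_average_cos_sub_integral_cos_le {Ω : Type*} [MeasurableSpace Ω] {μ : Measure Ω}
    {θ : ℕ → Ω → ℝ} (hmeas : ∀ q, Measurable (θ q)) (hindep : iIndepFun θ μ)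
    (hunif : ∀ q, μ.map (θ q) =
      (ENNReal.ofReal (2 * π))⁻¹ • volume.restrict (Set.Icc 0 (2 * π)))
    (hp : ∀ j, (p j).Prime) {T : ℝ} (hT : 0 < T) (A B : Finset ι) :
    |(1 / T) * (∫ t in T..2 * T, cos (∑ j ∈ A, t * log (p j) - ∑ j ∈ B, t * log (p j)))
      - ∫ ω, cos (∑ j ∈ A, θ (p j) ω - ∑ j ∈ B, θ (p j) ω) ∂μ|
      ≤ 4 * √((∏ j ∈ A, p j : ℕ) * (∏ j ∈ B, p j : ℕ)) / T := by
  have := hindep.isProbabilityMeasure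
  by_cases h : ∏ j ∈ A, p j = ∏ j ∈ B, p j
  · have hlog (t : ℝ) : ∑ j ∈ A, t * log (p j) = ∑ j ∈ B, t * log (p j) :=
      sum_comp_eq_of_prod_eq hp h fun q => t * log q
    have hθ (ω : Ω) : ∑ j ∈ A, θ (p j) ω = ∑ j ∈ B, θ (p j) ω :=
      sum_comp_eq_of_prod_eq hp h (θ · ω)
    simp only [hlog, hθ, sub_self, cos_zero, intervalIntegral.integral_const, integral_const,
      probReal_univ, smul_eq_mul, mul_one]
    rw [show 1 / T * (2 * T - T) - 1 = 0 by field_simp; ring, abs_zero]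
    positivity
  · rw [integral_cos_sum_sub_sum_eq_zero hmeas hindep hunif hp h, sub_zero]
    have hlog (s : Finset ι) : log (∏ j ∈ s, p j : ℕ) = ∑ j ∈ s, log (p j) := by
      push_cast
      exact log_prod fun j _ => by exact_mod_cast (hp j).ne_zero
    simp only [← mul_sum, ← mul_sub, ← hlog]
    exact abs_average_cos_mul_log_sub_le hT (prod_pos fun j _ => (hp j).pos)
      (prod_pos fun j _ => (hp j).pos) h

theorem abs_average_prod_cos_sub_integral_prod_cos_le [Fintype ι] [DecidableEq ι]
    {Ω : Type*} [MeasurableSpace Ω] {μ : Measure Ω}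
    {θ : ℕ → Ω → ℝ} (hmeas : ∀ q, Measurable (θ q)) (hindep : iIndepFun θ μ)
    (hunif : ∀ q, μ.map (θ q) =
      (ENNReal.ofReal (2 * π))⁻¹ • volume.restrict (Set.Icc 0 (2 * π)))
    (hp : ∀ j, (p j).Prime) {T : ℝ} (hT : 0 < T) :
    |(1 / T) * (∫ t in T..2 * T, ∏ j, cos (t * log (p j)))
      - ∫ ω, ∏ j, cos (θ (p j) ω) ∂μ| ≤ 4 * √(∏ j, (p j : ℝ)) / T := by
  have := hindep.isProbabilityMeasure
  set avg : Finset ι → ℝ := fun A =>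
    (1 / T) * ∫ t in T..2 * T,
      cos (∑ j ∈ A, t * log (p j) - ∑ j ∈ univ \ A, t * log (p j))
  set E : Finset ι → ℝ := fun A =>
    ∫ ω, cos (∑ j ∈ A, θ (p j) ω - ∑ j ∈ univ \ A, θ (p j) ω) ∂μ
  have havg : (1 / T) * (∫ t in T..2 * T, ∏ j, cos (t * log (p j))) =
      2⁻¹ ^ #(univ : Finset ι) * ∑ A ∈ univ.powerset, avg A := by
    simp only [prod_cos_eq_sum_powerset]
    rw [intervalIntegral.integral_const_mul, intervalIntegral.integral_finsetSum
      fun A _ => (by fun_prop : Continuous _).intervalIntegrable _ _, mul_left_comm, mul_sum]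
  have hE : ∫ ω, ∏ j, cos (θ (p j) ω) ∂μ =
      2⁻¹ ^ #(univ : Finset ι) * ∑ A ∈ univ.powerset, E A := by
    simp only [prod_cos_eq_sum_powerset]
    rw [integral_const_mul, integral_finsetSum _ fun A _ => .of_bound (by fun_prop) 1
      (ae_of_all _ fun ω => abs_cos_le_one _)]
  have hterm (A : Finset ι) : |avg A - E A| ≤ 4 * √(∏ j, (p j : ℝ)) / T := by
    have := abs_average_cos_sub_integral_cos_le hmeas hindep hunif hp hT A (univ \ A)
    rwa [← Nat.cast_mul, mul_comm (∏ j ∈ A, p j), prod_sdiff (subset_univ A),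
      Nat.cast_prod] at this
  calc _ = 2⁻¹ ^ #(univ : Finset ι) * |∑ A ∈ univ.powerset, (avg A - E A)| := by
        rw [havg, hE, ← mul_sub, ← sum_sub_distrib, abs_mul, abs_of_pos (by positivity)]
    _ ≤ 2⁻¹ ^ #(univ : Finset ι) *
          ∑ A ∈ (univ : Finset ι).powerset, 4 * √(∏ j, (p j : ℝ)) / T := by
        gcongr
        exact (abs_sum_le_sum_abs _ _).trans (sum_le_sum fun A _ => hterm A)
    _ = 4 * √(∏ j, (p j : ℝ)) / T := by
        rw [sum_const, card_powerset, nsmul_eq_mul, ← mul_assoc]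
        push_cast
        rw [← mul_pow, inv_mul_cancel₀ two_ne_zero, one_pow, one_mul]

end PrimeProducts

theorem stmt_0_general {Ω : Type*} [MeasurableSpace Ω] (μ : Measure Ω)
    (θ : ℕ → Ω → ℝ) (hmeas : ∀ p, Measurable (θ p))
    (hindep : iIndepFun θ μ)
    (hunif : ∀ p : ℕ, μ.map (θ p)
      = (ENNReal.ofReal (2 * π))⁻¹ • (volume.restrict (Set.Icc (0:ℝ) (2 * π))))
    (C₀ : ℝ) (hC₀ : 0 < C₀) :
    ∃ C > 0, ∃ T₀ : ℝ, ∀ T ≥ T₀, ∀ L : ℝ,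
      (Real.exp 2 * (Real.log T) ^ C₀) ^ (L / 2) ≤ T →
      ∀ ℓ : ℕ, (ℓ : ℝ) ≤ L → ∀ p : Fin ℓ → ℕ,
        (∀ j, (p j).Prime) → (∀ j, ((p j : ℝ)) ≤ (Real.log T) ^ C₀) →
        |(1 / T) * (∫ t in T..(2 * T), ∏ j, Real.cos (t * Real.log (p j)))
          - ∫ ω, ∏ j, Real.cos (θ (p j) ω) ∂μ| ≤ C * Real.exp (-L) := by
  refine ⟨4, by norm_num, exp 1, fun T hT L hTL ℓ hℓL p hp hpQ => ?_⟩
  have hT0 : 0 < T := (exp_pos 1).trans_le hT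
  set Q := log T ^ C₀
  have hQ : 1 ≤ Q := one_le_rpow ((le_log_iff_exp_le hT0).2 hT) hC₀.le
  have hprod : √(∏ j, (p j : ℝ)) ≤ Q ^ (L / 2) :=
    calc √(∏ j, (p j : ℝ)) ≤ √(Q ^ L) := by
          refine sqrt_le_sqrt
            ((prod_le_prod (fun _ _ => by positivity) fun j _ => hpQ j).trans ?_)
          rw [prod_const, card_univ, Fintype.card_fin, ← rpow_natCast]
          exact rpow_le_rpow_of_exponent_le hQ hℓL
      _ = Q ^ (L / 2) := by
          rw [sqrt_eq_rpow, ← rpow_mul (by positivity)]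
          ring_nf
  have hQT : exp L * Q ^ (L / 2) ≤ T := by
    rwa [mul_rpow (exp_pos 2).le (by positivity), ← exp_mul, mul_div_cancel₀ _ two_ne_zero]
      at hTL
  calc _ ≤ 4 * √(∏ j, (p j : ℝ)) / T :=
        abs_average_prod_cos_sub_integral_prod_cos_le hmeas hindep hunif hp hT0
    _ ≤ 4 * (exp (-L) * T) / T := by
        gcongr
        rw [exp_neg, inv_mul_eq_div, le_div_iff₀' (exp_pos L)]
        exact (mul_le_mul_of_nonneg_left hprod (exp_pos L).le).trans hQT
    _ = 4 * exp (-L) := by field_simp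

/-- For `T` large, `Q = (log T)^{C₀}` and `(e²Q)^{L/2} ≤ T`, the average
`(1/T)∫_T^{2T} ∏ cos(t log p_j) dt` equals the expectation of `∏ cos θ_{p_j}` for
independent uniformly distributed angles, up to `O(e^{-L})`. -/
theorem stmt_0 {Ω : Type*} [MeasurableSpace Ω] (μ : Measure Ω) [IsProbabilityMeasure μ]
    (θ : ℕ → Ω → ℝ) (hmeas : ∀ p, Measurable (θ p))
    (hindep : iIndepFun θ μ)
    (hunif : ∀ p : ℕ, μ.map (θ p)
      = (ENNReal.ofReal (2 * π))⁻¹ • (volume.restrict (Set.Icc (0:ℝ) (2 * π))))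
    (C₀ : ℝ) (hC₀ : 0 < C₀) :
    ∃ C > 0, ∃ T₀ : ℝ, ∀ T ≥ T₀, ∀ L : ℝ,
      (Real.exp 2 * (Real.log T) ^ C₀) ^ (L / 2) ≤ T →
      ∀ ℓ : ℕ, (ℓ : ℝ) ≤ L → ∀ p : Fin ℓ → ℕ,
        (∀ j, (p j).Prime) → (∀ j, ((p j : ℝ)) ≤ (Real.log T) ^ C₀) →
        |(1 / T) * (∫ t in T..(2 * T), ∏ j, Real.cos (t * Real.log (p j)))
          - ∫ ω, ∏ j, Real.cos (θ (p j) ω) ∂μ| ≤ C * Real.exp (-L) :=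
  stmt_0_general μ θ hmeas hindep hunif C₀ hC₀
end

section
/- Let Y be a random variable supported on [−1, 1] with E(Y) = 0 satisfying P(Y > 1 − 1/t) ≫ exp(−c e^{√t}) for all t ≥ 1 and some constant c > 0. Define f(t) = log E(e^{tY}) for 0 ≤ t < 1 and f(t) = log E(e^{tY}) − t for t ≥ 1. Then f(t) ≪ t^2 for 0 ≤ t < 1, and f(t) ≪ t/(log 2t)^2 for t ≥ 1. In particular the integral ∫_0^∞ f(u)/u^2 du converges. -/
open Real MeasureTheory ProbabilityTheory Set Filter Topology

/-! On `[0, 1)` the bound is Hoeffding's lemma `cgf t ≤ t² / 2` together with `cgf ≥ 0`, which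
holds since `𝔼 Y = 0`. For `t ≥ 1` we have `cgf t ≤ t` since `Y ≤ 1`, and conversely, for every
`s ≥ 1`, restricting `𝔼 e^{tY}` to the event `Y > 1 - 1/s` gives
`t - cgf t ≤ t / s + c e^{√s} - log κ`. The choice `s = (log (2t) / 2)² + 1` makes
`e^{√s} ≤ e √(2t)`, and both `t / s` and `√(2t)` are `O(t / (log 2t)²)`. The integrability of
`f(u) / u²` follows from these bounds and `∫_1^∞ du / (u (log 2u)²) < ∞`. -/

lemma sq_le_two_mul_exp {x : ℝ} (hx : 0 ≤ x) : x ^ 2 ≤ 2 * exp x := by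
  nlinarith [quadratic_le_exp_of_nonneg hx]

lemma sq_log_le_two_mul {y : ℝ} (hy : 1 ≤ y) : log y ^ 2 ≤ 2 * y := by
  simpa [exp_log (by linarith : 0 < y)] using sq_le_two_mul_exp (log_nonneg hy)

lemma sqrt_mul_sq_log_le {y : ℝ} (hy : 1 ≤ y) : √y * log y ^ 2 ≤ 8 * y := by
  have hlog : log y = 2 * log √y :=
    calc log y = log (√y ^ 2) := by rw [sq_sqrt (by linarith)]
      _ = 2 * log √y := by rw [log_pow]; norm_num
  calc √y * log y ^ 2 = 4 * √y * log √y ^ 2 := by rw [hlog]; ring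
    _ ≤ 4 * √y * (2 * √y) := by gcongr; exact sq_log_le_two_mul (one_le_sqrt.2 hy)
    _ = 8 * y := by rw [mul_mul_mul_comm, mul_self_sqrt (by linarith)]; ring

lemma exists_div_add_mul_exp_sqrt_le {c t : ℝ} (hc : 0 ≤ c) (ht : 1 ≤ t) :
    ∃ s ≥ 1, t / s + c * exp √s ≤ (4 + 16 * exp 1 * c) * (t / log (2 * t) ^ 2) := by
  set L := log (2 * t) with hL_def
  have hL : 0 < L := log_pos (by linarith)
  refine ⟨(L / 2) ^ 2 + 1, by nlinarith, ?_⟩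
  have hdiv : t / ((L / 2) ^ 2 + 1) ≤ 4 * (t / L ^ 2) :=
    calc t / ((L / 2) ^ 2 + 1) ≤ t / (L / 2) ^ 2 := by gcongr; linarith
      _ = 4 * (t / L ^ 2) := by field_simp; ring
  have hsqrt : √((L / 2) ^ 2 + 1) ≤ L / 2 + 1 := by
    rw [sqrt_le_iff]; constructor <;> nlinarith
  have hexp : exp (L / 2) = √(2 * t) := by
    rw [sqrt_eq_rpow, rpow_def_of_pos (by linarith), hL_def, div_eq_mul_one_div]
  have hroot : √(2 * t) ≤ 16 * (t / L ^ 2) := by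
    rw [mul_div_assoc', le_div_iff₀ (by positivity)]
    linarith [sqrt_mul_sq_log_le (by linarith : 1 ≤ 2 * t)]
  have hexp_sqrt : exp √((L / 2) ^ 2 + 1) ≤ exp 1 * (16 * (t / L ^ 2)) :=
    calc exp √((L / 2) ^ 2 + 1) ≤ exp (L / 2 + 1) := exp_le_exp.2 hsqrt
      _ = exp 1 * √(2 * t) := by rw [exp_add, hexp, mul_comm]
      _ ≤ exp 1 * (16 * (t / L ^ 2)) := by gcongr
  nlinarith [mul_le_mul_of_nonneg_left hexp_sqrt hc]

lemma integrableOn_Ioi_inv_mul_sq_log :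
    IntegrableOn (fun u : ℝ ↦ (u * log (2 * u) ^ 2)⁻¹) (Ioi 1) := by
  have hderiv : ∀ x ∈ Ici (1 : ℝ),
      HasDerivAt (fun u ↦ -(log (2 * u))⁻¹) (x * log (2 * x) ^ 2)⁻¹ x := by
    intro x hx
    have hx0 : (0 : ℝ) < x := by linarith [mem_Ici.1 hx]
    have hL : 0 < log (2 * x) := log_pos (by linarith [mem_Ici.1 hx])
    have hlog : HasDerivAt (fun u ↦ log (2 * u)) (2 / (2 * x)) x := by
      simpa using ((hasDerivAt_id x).const_mul 2).log (by positivity)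
    refine (hlog.fun_inv hL.ne').fun_neg.congr_deriv ?_
    field_simp
  have hlim : Tendsto (fun u : ℝ ↦ -(log (2 * u))⁻¹) atTop (𝓝 0) := by
    simpa using ((tendsto_log_atTop.comp
      (tendsto_id.const_mul_atTop two_pos)).inv_tendsto_atTop).neg
  refine integrableOn_Ioi_deriv_of_nonneg' hderiv (fun x hx ↦ ?_) hlim
  have : (0 : ℝ) < x := by linarith [mem_Ioi.1 hx]
  positivity

lemma integrableOn_Ioi_div_sq_of_le {g : ℝ → ℝ} {C : ℝ}
    (hg : AEStronglyMeasurable g (volume.restrict (Ioi 0)))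
    (hsmall : ∀ t : ℝ, 0 ≤ t → t < 1 → |g t| ≤ C * t ^ 2)
    (hlarge : ∀ t : ℝ, 1 ≤ t → |g t| ≤ C * t / log (2 * t) ^ 2) :
    IntegrableOn (fun u ↦ g u / u ^ 2) (Ioi 0) := by
  have hmeas : AEStronglyMeasurable (fun u ↦ g u / u ^ 2) (volume.restrict (Ioi 0)) :=
    hg.div₀ (by fun_prop)
  rw [← Ioo_union_Ici_eq_Ioi zero_lt_one]
  refine IntegrableOn.union ?_ ?_
  · refine Integrable.mono' (integrable_const C) (hmeas.mono_set Ioo_subset_Ioi_self) ?_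
    refine ae_restrict_of_forall_mem measurableSet_Ioo fun u ⟨hu0, hu1⟩ ↦ ?_
    rw [norm_div, norm_pow, Real.norm_eq_abs, Real.norm_eq_abs, sq_abs,
      div_le_iff₀ (pow_pos hu0 2)]
    exact hsmall u hu0.le hu1
  · rw [integrableOn_Ici_iff_integrableOn_Ioi]
    refine Integrable.mono' (integrableOn_Ioi_inv_mul_sq_log.const_mul C)
      (hmeas.mono_set (Ioi_subset_Ioi zero_le_one)) ?_
    refine ae_restrict_of_forall_mem measurableSet_Ioi fun u hu ↦ ?_
    have hu0 : 0 < u := by linarith [mem_Ioi.1 hu]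
    have hL : 0 < log (2 * u) := log_pos (by linarith [mem_Ioi.1 hu])
    rw [norm_div, norm_pow, Real.norm_eq_abs, Real.norm_eq_abs, sq_abs,
      div_le_iff₀ (pow_pos hu0 2)]
    calc |g u| ≤ C * u / log (2 * u) ^ 2 := hlarge u (le_of_lt hu)
      _ = C * (u * log (2 * u) ^ 2)⁻¹ * u ^ 2 := by field_simp

namespace ProbabilityTheory

variable {Ω : Type*} [MeasurableSpace Ω] {μ : Measure Ω} [IsProbabilityMeasure μ] {X : Ω → ℝ}
  {t : ℝ}

lemma one_le_mgf_of_integral_eq_zero (hX : Integrable X μ)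
    (h_int : Integrable (fun ω ↦ exp (t * X ω)) μ) (hmean : μ[X] = 0) : 1 ≤ mgf X μ t :=
  calc 1 = ∫ ω, (1 + t * X ω) ∂μ := by
        rw [integral_add (integrable_const 1) (hX.const_mul t), integral_const_mul, hmean]; simp
    _ ≤ mgf X μ t := integral_mono ((integrable_const 1).add (hX.const_mul t)) h_int
        fun ω ↦ by linarith [add_one_le_exp (t * X ω)]

lemma cgf_nonneg_of_integral_eq_zero (hX : Integrable X μ)
    (h_int : Integrable (fun ω ↦ exp (t * X ω)) μ) (hmean : μ[X] = 0) : 0 ≤ cgf X μ t :=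
  log_nonneg (one_le_mgf_of_integral_eq_zero hX h_int hmean)

lemma cgf_le_sq_div_two_of_mem_Icc (hm : AEMeasurable X μ)
    (hb : ∀ᵐ ω ∂μ, X ω ∈ Icc (-1) 1) (hmean : μ[X] = 0) (t : ℝ) : cgf X μ t ≤ t ^ 2 / 2 := by
  simpa [one_add_one_eq_two] using
    (hasSubgaussianMGF_of_mem_Icc_of_integral_eq_zero hm hb hmean).cgf_le t

lemma cgf_le_mul_of_le {b : ℝ} (ht : 0 ≤ t) (hb : ∀ᵐ ω ∂μ, X ω ≤ b)
    (h_int : Integrable (fun ω ↦ exp (t * X ω)) μ) : cgf X μ t ≤ t * b := by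
  have hmgf : mgf X μ t ≤ exp (t * b) :=
    (mgf_mono_of_nonneg hb ht (integrable_const _)).trans_eq (mgf_const b)
  exact (log_le_log (mgf_pos h_int) hmgf).trans_eq (log_exp _)

lemma mul_add_log_le_cgf {a p : ℝ} (ht : 0 ≤ t) (h_int : Integrable (fun ω ↦ exp (t * X ω)) μ)
    (hp : 0 < p) (hpX : p ≤ μ.real {ω | a ≤ X ω}) : t * a + log p ≤ cgf X μ t := by
  have hmgf : exp (t * a) * p ≤ mgf X μ t := by
    have := (hpX.trans (measure_ge_le_exp_mul_mgf a ht h_int))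
    rwa [neg_mul, exp_neg, inv_mul_eq_div, le_div_iff₀' (exp_pos _)] at this
  calc t * a + log p = log (exp (t * a) * p) := by rw [log_mul (exp_ne_zero _) hp.ne', log_exp]
    _ ≤ cgf X μ t := log_le_log (by positivity) hmgf

lemma sub_cgf_le_of_tail {c κ : ℝ} (hc : 0 ≤ c) (hκ : 0 < κ)
    (h_int : Integrable (fun ω ↦ exp (t * X ω)) μ)
    (htail : ∀ s : ℝ, 1 ≤ s → κ * exp (-c * exp √s) ≤ μ.real {ω | 1 - 1 / s < X ω})
    (ht : 1 ≤ t) :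
    t - cgf X μ t ≤ (4 + 16 * exp 1 * c + 4 * |log κ|) * (t / log (2 * t) ^ 2) := by
  obtain ⟨s, hs, hts⟩ := exists_div_add_mul_exp_sqrt_le hc ht
  have hlow := mul_add_log_le_cgf (a := 1 - 1 / s) (by linarith) h_int (by positivity)
    ((htail s hs).trans (measureReal_mono fun ω (hω : 1 - 1 / s < X ω) ↦ hω.le))
  rw [log_mul hκ.ne' (exp_ne_zero _), log_exp] at hlow
  have hlog_κ : -log κ ≤ 4 * |log κ| * (t / log (2 * t) ^ 2) := by
    have hL : 0 < log (2 * t) := log_pos (by linarith)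
    have : 1 ≤ 4 * (t / log (2 * t) ^ 2) := by
      rw [mul_div_assoc', one_le_div (by positivity)]
      linarith [sq_log_le_two_mul (by linarith : 1 ≤ 2 * t)]
    nlinarith [neg_le_abs (log κ), abs_nonneg (log κ)]
  have hts' : t * (1 - 1 / s) = t - t / s := by field_simp
  nlinarith

end ProbabilityTheory

/-- For a mean-zero random variable `Y` supported on `[-1,1]` with
`P(Y > 1 - 1/t) ≫ exp(-c e^{√t})`, the function `f(t) = log E(e^{tY})` (minus `t` for `t ≥ 1`)
satisfies `f(t) ≪ t²` on `[0,1)` and `f(t) ≪ t/(log 2t)²` on `[1,∞)`; in particular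
`∫_0^∞ f(u)/u² du` converges. -/
theorem stmt_7 {Ω : Type*} [MeasurableSpace Ω] (μ : Measure Ω) [IsProbabilityMeasure μ]
    (Y : Ω → ℝ) (hYmeas : Measurable Y) (hYbdd : ∀ ω, Y ω ∈ Set.Icc (-1 : ℝ) 1)
    (hYmean : ∫ ω, Y ω ∂μ = 0)
    (c κ : ℝ) (hc : 0 < c) (hκ : 0 < κ)
    (hYlow : ∀ t : ℝ, 1 ≤ t →
      κ * Real.exp (-c * Real.exp (Real.sqrt t)) ≤ (μ {ω | 1 - 1 / t < Y ω}).toReal)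
    (f : ℝ → ℝ)
    (hf : ∀ t : ℝ, 0 ≤ t →
      f t = if t < 1 then Real.log (∫ ω, Real.exp (t * Y ω) ∂μ)
            else Real.log (∫ ω, Real.exp (t * Y ω) ∂μ) - t) :
    ∃ C > 0,
      (∀ t : ℝ, 0 ≤ t → t < 1 → |f t| ≤ C * t ^ 2) ∧
      (∀ t : ℝ, 1 ≤ t → |f t| ≤ C * t / (Real.log (2 * t)) ^ 2) ∧
      IntegrableOn (fun u => f u / u ^ 2) (Set.Ioi (0 : ℝ)) volume := by
  have hYb : ∀ᵐ ω ∂μ, Y ω ∈ Icc (-1 : ℝ) 1 := ae_of_all _ hYbdd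
  have h_int (t : ℝ) : Integrable (fun ω ↦ exp (t * Y ω)) μ :=
    integrable_exp_mul_of_mem_Icc hYmeas.aemeasurable hYb
  have hf_cgf (t : ℝ) (ht : 0 ≤ t) : f t = if t < 1 then cgf Y μ t else cgf Y μ t - t := hf t ht
  set K := 4 + 16 * exp 1 * c + 4 * |log κ|
  have hsmall (t : ℝ) (ht : 0 ≤ t) (ht1 : t < 1) : |f t| ≤ K * t ^ 2 := by
    rw [hf_cgf t ht, if_pos ht1, abs_of_nonneg (cgf_nonneg_of_integral_eq_zero
      (.of_mem_Icc (-1) 1 hYmeas.aemeasurable hYb) (h_int t) hYmean)]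
    nlinarith [cgf_le_sq_div_two_of_mem_Icc hYmeas.aemeasurable hYb hYmean t, sq_nonneg t,
      mul_nonneg (mul_nonneg (exp_pos 1).le hc.le) (sq_nonneg t), abs_nonneg (log κ)]
  have hlarge (t : ℝ) (ht : 1 ≤ t) : |f t| ≤ K * t / log (2 * t) ^ 2 := by
    have hle : cgf Y μ t ≤ t := by
      simpa using cgf_le_mul_of_le (by linarith) (hYb.mono fun ω h ↦ h.2) (h_int t)
    rw [hf_cgf t (by linarith), if_neg (not_lt.2 ht), abs_of_nonpos (by linarith), neg_sub,
      mul_div_assoc]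
    exact sub_cgf_le_of_tail hc.le hκ (h_int t) hYlow ht
  have hmeas : AEStronglyMeasurable f (volume.restrict (Ioi 0)) := by
    have hcgf : Measurable (cgf Y μ) := (continuous_mgf h_int).measurable.log
    have hg : Measurable fun t ↦ if t < 1 then cgf Y μ t else cgf Y μ t - t :=
      Measurable.ite (measurableSet_lt measurable_id measurable_const) hcgf (hcgf.sub measurable_id)
    refine hg.aestronglyMeasurable.congr ?_
    exact ae_restrict_of_forall_mem measurableSet_Ioi fun t ht ↦ (hf_cgf t (le_of_lt ht)).symm
  exact ⟨K, by positivity, hsmall, hlarge, integrableOn_Ioi_div_sq_of_le hmeas hsmall hlarge⟩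
end

section
/- Let Y be a random variable supported on [−1, 1] with E(Y) = 0 satisfying P(Y > 1 − 1/t) ≫ exp(−c e^{√t}) for all t ≥ 1. Define f(t) = log E(e^{tY}) for 0 < t < 1 and f(t) = log E(e^{tY}) − t for t > 1. Then f is differentiable on (0,∞)\{1} with f′(t) ≪ t for 0 < t < 1 and f′(t) ≪ 1/(log 2t)^2 for t > 1. -/
/-!
On `(0, 1)` the function `f` is the cumulant generating function `cgf Y μ`, and on `(1, ∞)` it is
`cgf Y μ - id`. Since `Y` is bounded, `cgf` is smooth with derivative
`E(Y e^{tY}) / E(e^{tY})`, the mean of `Y` under the exponentially tilted law.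

For small `t`: `E(e^{tY}) ≥ 1` because `E Y = 0`, and `E(Y e^{tY}) = E(Y (e^{tY} - 1)) = O(t)`.

For large `t`: splitting along `{Y > 1 - δ}` gives `E((1 - Y) e^{tY}) ≤ δ E(e^{tY}) + 2 e^{t(1-δ)}`,
while the Chernoff bound turns the tail hypothesis at `s` into
`E(e^{tY}) ≥ e^{t(1 - 1/s)} κ exp(-c e^{√s})`. With `√s = log(2t)/2` and `δ = 4/s` the second term
is negligible, so `|f'(t)| = 1 - E(Y e^{tY}) / E(e^{tY}) ≪ 1/s ≍ 1/(log 2t)²`.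
-/

open Real MeasureTheory Filter Set

lemma exp_mul_exp_sub_le_div_sq {c x : ℝ} (hx : 0 < x) (hcx : 11 * (c + 1) ≤ exp (x / 2)) :
    exp (c * exp x - 3 * exp (2 * x) / (2 * x ^ 2)) ≤ 16 / x ^ 2 := by
  set u := exp (x / 4)
  have hu1 : 1 ≤ u := one_le_exp (by positivity)
  have hxu : x ≤ 4 * u := by linarith [add_one_le_exp (x / 4)]
  have hexp (n : ℕ) : exp (n * (x / 4)) = u ^ n := exp_nat_mul _ n
  have hu2 : exp (x / 2) = u ^ 2 := by rw [← hexp]; ring_nf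
  have hu4 : exp x = u ^ 4 := by rw [← hexp]; ring_nf
  have hu8 : exp (2 * x) = u ^ 8 := by rw [← hexp]; ring_nf
  have hc : (c + 1) * (2 * x ^ 2) ≤ 3 * u ^ 4 := by
    rcases le_or_gt (c + 1) 0 with hc | hc
    · nlinarith [sq_nonneg x, sq_nonneg (u ^ 2)]
    · rw [hu2] at hcx
      nlinarith [mul_le_mul_of_nonneg_left (pow_le_pow_left₀ hx.le hxu 2) hc.le]
  have hexpo : c * exp x - 3 * exp (2 * x) / (2 * x ^ 2) ≤ -u ^ 4 := by
    have : (c + 1) * u ^ 4 ≤ 3 * u ^ 8 / (2 * x ^ 2) := by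
      rw [le_div_iff₀ (by positivity)]
      nlinarith [mul_le_mul_of_nonneg_left hc (by positivity : (0 : ℝ) ≤ u ^ 4)]
    rw [hu4, hu8]
    linarith
  calc exp (c * exp x - 3 * exp (2 * x) / (2 * x ^ 2)) ≤ exp (-u ^ 4) := exp_le_exp.2 hexpo
    _ ≤ 1 / (u ^ 4 + 1) := by
        rw [exp_neg, ← one_div]; gcongr; exact add_one_le_exp _
    _ ≤ 16 / x ^ 2 := by
        rw [div_le_div_iff₀ (by positivity) (by positivity)]
        nlinarith [pow_le_pow_left₀ hx.le hxu 2, sq_nonneg (u ^ 2 - 1)]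

namespace ProbabilityTheory

variable {Ω : Type*} {m : MeasurableSpace Ω} {μ : Measure Ω} {X : Ω → ℝ} {t : ℝ}

lemma mem_interior_integrableExpSet_of_mem_Icc [IsFiniteMeasure μ] {a b : ℝ}
    (hm : AEMeasurable X μ) (hb : ∀ᵐ ω ∂μ, X ω ∈ Icc a b) (t : ℝ) :
    t ∈ interior (integrableExpSet X μ) := by
  have : integrableExpSet X μ = univ :=
    eq_univ_of_forall fun _ ↦ integrable_exp_mul_of_mem_Icc hm hb
  simp [this]

section UnitInterval

variable [IsProbabilityMeasure μ]

lemma integrable_mul_exp_mul_of_mem_Icc (hm : AEMeasurable X μ)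
    (hb : ∀ᵐ ω ∂μ, X ω ∈ Icc (-1) 1) (t : ℝ) :
    Integrable (fun ω ↦ X ω * exp (t * X ω)) μ := by
  simpa using integrable_pow_mul_exp_of_mem_interior_integrableExpSet
    (mem_interior_integrableExpSet_of_mem_Icc hm hb t) 1

lemma one_le_mgf_of_integral_eq_zero_s8 (hm : AEMeasurable X μ)
    (hb : ∀ᵐ ω ∂μ, X ω ∈ Icc (-1) 1) (h0 : μ[X] = 0) : 1 ≤ mgf X μ t := by
  have hX : Integrable X μ := by
    simpa using integrable_mul_exp_mul_of_mem_Icc hm hb 0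
  calc (1 : ℝ) = μ[fun ω ↦ 1 + t * X ω] := by
        rw [integral_add (integrable_const 1) (hX.const_mul t), integral_const_mul, h0]; simp
    _ ≤ mgf X μ t :=
        integral_mono ((integrable_const 1).add (hX.const_mul t))
          (integrable_exp_mul_of_mem_Icc hm hb) fun ω ↦ by
            linarith [add_one_le_exp (t * X ω)]

lemma abs_integral_mul_exp_le (hm : AEMeasurable X μ)
    (hb : ∀ᵐ ω ∂μ, X ω ∈ Icc (-1) 1) (h0 : μ[X] = 0) (ht : |t| ≤ 1) :
    |μ[fun ω ↦ X ω * exp (t * X ω)]| ≤ 2 * |t| := by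
  have hX : Integrable X μ := by
    simpa using integrable_mul_exp_mul_of_mem_Icc hm hb 0
  have hcenter : μ[fun ω ↦ X ω * exp (t * X ω)] = μ[fun ω ↦ X ω * (exp (t * X ω) - 1)] := by
    simp_rw [mul_sub_one]
    rw [integral_sub (integrable_mul_exp_mul_of_mem_Icc hm hb t) hX, h0, sub_zero]
  rw [hcenter, ← norm_eq_abs]
  refine (norm_integral_le_of_norm_le_const (C := 2 * |t|) ?_).trans_eq (by simp)
  filter_upwards [hb] with ω hω
  have hX1 : |X ω| ≤ 1 := abs_le.2 hω
  have htX : |t * X ω| ≤ |t| := by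
    rw [abs_mul]; exact mul_le_of_le_one_right (abs_nonneg t) hX1
  rw [norm_mul, norm_eq_abs, norm_eq_abs]
  calc |X ω| * |exp (t * X ω) - 1| ≤ 1 * (2 * |t * X ω|) :=
        mul_le_mul hX1 (abs_exp_sub_one_le (htX.trans ht)) (abs_nonneg _) zero_le_one
    _ ≤ 2 * |t| := by linarith

lemma abs_deriv_cgf_le_two_mul_abs (hm : AEMeasurable X μ)
    (hb : ∀ᵐ ω ∂μ, X ω ∈ Icc (-1) 1) (h0 : μ[X] = 0) (ht : |t| ≤ 1) :
    |deriv (cgf X μ) t| ≤ 2 * |t| := by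
  have hM := one_le_mgf_of_integral_eq_zero_s8 (t := t) hm hb h0
  rw [deriv_cgf (mem_interior_integrableExpSet_of_mem_Icc hm hb t), abs_div,
    abs_of_pos (zero_lt_one.trans_le hM)]
  exact (div_le_self (abs_nonneg _) hM).trans (abs_integral_mul_exp_le hm hb h0 ht)

lemma abs_deriv_cgf_le_one (hm : AEMeasurable X μ) (hb : ∀ᵐ ω ∂μ, X ω ∈ Icc (-1) 1) :
    |deriv (cgf X μ) t| ≤ 1 := by
  have hint := integrable_exp_mul_of_mem_Icc (t := t) hm hb
  rw [deriv_cgf (mem_interior_integrableExpSet_of_mem_Icc hm hb t), abs_div,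
    abs_of_pos (mgf_pos hint), div_le_one (mgf_pos hint), ← norm_eq_abs]
  refine norm_integral_le_of_norm_le hint ?_
  filter_upwards [hb] with ω hω
  rw [norm_mul, norm_of_nonneg (exp_pos _).le, norm_eq_abs]
  exact mul_le_of_le_one_left (exp_pos _).le (abs_le.2 hω)

lemma one_sub_mul_exp_mul_le {x δ : ℝ} (hx : x ∈ Icc (-1) 1) (ht : 0 ≤ t) (hδ : 0 ≤ δ) :
    (1 - x) * exp (t * x) ≤ δ * exp (t * x) + 2 * exp (t * (1 - δ)) := by
  have h₁ : 0 ≤ δ * exp (t * x) := by positivity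
  have h₂ : 0 ≤ 2 * exp (t * (1 - δ)) := by positivity
  rcases lt_or_ge (1 - δ) x with hxδ | hxδ
  · nlinarith [exp_pos (t * x)]
  · have : exp (t * x) ≤ exp (t * (1 - δ)) := exp_le_exp.2 (by nlinarith)
    nlinarith [exp_pos (t * x), hx.1]

lemma mgf_sub_integral_mul_exp_le (hm : AEMeasurable X μ) (hb : ∀ᵐ ω ∂μ, X ω ∈ Icc (-1) 1)
    (ht : 0 ≤ t) {δ : ℝ} (hδ : 0 ≤ δ) :
    mgf X μ t - μ[fun ω ↦ X ω * exp (t * X ω)] ≤ δ * mgf X μ t + 2 * exp (t * (1 - δ)) := by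
  have hint := integrable_exp_mul_of_mem_Icc (t := t) hm hb
  have hint' := integrable_mul_exp_mul_of_mem_Icc hm hb t
  calc mgf X μ t - μ[fun ω ↦ X ω * exp (t * X ω)]
      = μ[fun ω ↦ exp (t * X ω) - X ω * exp (t * X ω)] := (integral_sub hint hint').symm
    _ ≤ μ[fun ω ↦ δ * exp (t * X ω) + 2 * exp (t * (1 - δ))] := by
        refine integral_mono_ae (hint.sub hint') ((hint.const_mul δ).add (integrable_const _)) ?_
        filter_upwards [hb] with ω hω
        simpa [sub_mul] using one_sub_mul_exp_mul_le hω ht hδ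
    _ = δ * mgf X μ t + 2 * exp (t * (1 - δ)) := by
        rw [integral_add (hint.const_mul δ) (integrable_const _), integral_const_mul]; simp [mgf]

/-- `deriv (cgf X μ) t` is the mean of `X` under the law tilted by `exp (t * X)`; a lower bound `p`
on `P(X > r)` forces it to within `δ` of `1` up to the error `2 exp (t (1 - δ - r)) / p`. -/
lemma one_sub_deriv_cgf_le (hm : AEMeasurable X μ) (hb : ∀ᵐ ω ∂μ, X ω ∈ Icc (-1) 1)
    (ht : 0 ≤ t) {δ r p : ℝ} (hδ : 0 ≤ δ) (hp : 0 < p) (hr : p ≤ μ.real {ω | r < X ω}) :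
    1 - deriv (cgf X μ) t ≤ δ + 2 * exp (t * (1 - δ - r)) / p := by
  have hint := integrable_exp_mul_of_mem_Icc (t := t) hm hb
  have hM := mgf_pos (μ := μ) hint
  have htail : exp (t * r) * p ≤ mgf X μ t := by
    have hchernoff := (hr.trans (measureReal_mono fun ω (h : r < X ω) ↦ h.le)).trans
      (measure_ge_le_exp_mul_mgf r ht hint)
    rw [neg_mul, exp_neg, inv_mul_eq_div, le_div_iff₀' (exp_pos _)] at hchernoff
    exact hchernoff
  have hsplit := mgf_sub_integral_mul_exp_le hm hb ht hδ
  rw [deriv_cgf (mem_interior_integrableExpSet_of_mem_Icc hm hb t), one_sub_div hM.ne',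
    div_le_iff₀ hM]
  calc mgf X μ t - μ[fun ω ↦ X ω * exp (t * X ω)]
      ≤ δ * mgf X μ t + 2 * exp (t * (1 - δ)) := hsplit
    _ = δ * mgf X μ t + 2 * exp (t * (1 - δ - r)) / p * (exp (t * r) * p) := by
        rw [mul_sub t (1 - δ), exp_sub]; field_simp
    _ ≤ (δ + 2 * exp (t * (1 - δ - r)) / p) * mgf X μ t := by
        rw [add_mul]; gcongr

lemma exists_one_sub_deriv_cgf_le_div_log_sq (hm : AEMeasurable X μ)
    (hb : ∀ᵐ ω ∂μ, X ω ∈ Icc (-1) 1) {c κ : ℝ} (hκ : 0 < κ)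
    (htail : ∀ s : ℝ, 1 ≤ s → κ * exp (-c * exp √s) ≤ μ.real {ω | 1 - 1 / s < X ω}) :
    ∃ C, ∀ t, 1 < t → 1 - deriv (cgf X μ) t ≤ C / log (2 * t) ^ 2 := by
  obtain ⟨x₀, hx₀⟩ : ∃ x₀, ∀ x ≥ x₀, 1 ≤ x ∧ 11 * (c + 1) ≤ exp (x / 2) :=
    eventually_atTop.1 <| (eventually_ge_atTop 1).and <|
      (tendsto_exp_atTop.comp (tendsto_id.atTop_div_const two_pos)).eventually_ge_atTop _
  refine ⟨max (8 * x₀ ^ 2) (16 + 128 / κ), fun t ht ↦ ?_⟩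
  set x := log (2 * t) / 2
  have hL : log (2 * t) = 2 * x := by ring
  have hx : 0 < x := by have := log_pos (by linarith : 1 < 2 * t); positivity
  have h2x : exp (2 * x) = 2 * t := by rw [← hL, exp_log (by linarith)]
  rw [hL]
  rcases le_or_gt x₀ x with hlarge | hsmall
  -- Tail hypothesis at `s = x²`, where `exp √s = √(2t)`; split at `δ = 4 / x²`.
  · obtain ⟨hx1, hcx⟩ := hx₀ x hlarge
    have htail' : κ * exp (-c * exp x) ≤ μ.real {ω | 1 - 1 / x ^ 2 < X ω} := by
      have h := htail (x ^ 2) (one_le_pow₀ hx1)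
      rwa [sqrt_sq hx.le] at h
    have herr : 2 * exp (t * (1 - 4 / x ^ 2 - (1 - 1 / x ^ 2))) / (κ * exp (-c * exp x))
        = 2 / κ * exp (c * exp x - 3 * exp (2 * x) / (2 * x ^ 2)) := by
      rw [h2x, show c * exp x - 3 * (2 * t) / (2 * x ^ 2)
        = t * (1 - 4 / x ^ 2 - (1 - 1 / x ^ 2)) - (-c * exp x) by field_simp; ring, exp_sub]
      field_simp
    calc 1 - deriv (cgf X μ) t
        ≤ 4 / x ^ 2 + 2 / κ * exp (c * exp x - 3 * exp (2 * x) / (2 * x ^ 2)) :=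
          (one_sub_deriv_cgf_le hm hb (by linarith) (δ := 4 / x ^ 2) (by positivity)
            (by positivity) htail').trans_eq (by rw [herr])
      _ ≤ 4 / x ^ 2 + 2 / κ * (16 / x ^ 2) := by gcongr; exact exp_mul_exp_sub_le_div_sq hx hcx
      _ = (16 + 128 / κ) / (2 * x) ^ 2 := by field_simp; ring
      _ ≤ max (8 * x₀ ^ 2) (16 + 128 / κ) / (2 * x) ^ 2 := by gcongr; exact le_max_right _ _
  · calc 1 - deriv (cgf X μ) t ≤ 2 := by
          linarith [(abs_le.1 (abs_deriv_cgf_le_one (t := t) hm hb)).1]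
      _ ≤ 8 * x₀ ^ 2 / (2 * x) ^ 2 := by
          rw [le_div_iff₀ (by positivity)]; nlinarith
      _ ≤ max (8 * x₀ ^ 2) (16 + 128 / κ) / (2 * x) ^ 2 := by gcongr; exact le_max_left _ _

end UnitInterval

end ProbabilityTheory

open ProbabilityTheory Topology in
theorem stmt_8_general {Ω : Type*} [MeasurableSpace Ω] (μ : Measure Ω) [IsProbabilityMeasure μ]
    (Y : Ω → ℝ) (hYmeas : Measurable Y) (hYbdd : ∀ ω, Y ω ∈ Set.Icc (-1 : ℝ) 1)
    (hYmean : ∫ ω, Y ω ∂μ = 0)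
    (c κ : ℝ) (hκ : 0 < κ)
    (hYlow : ∀ t : ℝ, 1 ≤ t →
      κ * Real.exp (-c * Real.exp (Real.sqrt t)) ≤ (μ {ω | 1 - 1 / t < Y ω}).toReal)
    (f : ℝ → ℝ)
    (hf : ∀ t : ℝ, 0 < t →
      f t = if t < 1 then Real.log (∫ ω, Real.exp (t * Y ω) ∂μ)
            else Real.log (∫ ω, Real.exp (t * Y ω) ∂μ) - t) :
    (∀ t ∈ Set.Ioi (0 : ℝ) \ {1}, DifferentiableAt ℝ f t) ∧
    ∃ C > 0,
      (∀ t : ℝ, 0 < t → t < 1 → |deriv f t| ≤ C * t) ∧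
      (∀ t : ℝ, 1 < t → |deriv f t| ≤ C / (Real.log (2 * t)) ^ 2) := by
  have hm := hYmeas.aemeasurable (μ := μ)
  have hb : ∀ᵐ ω ∂μ, Y ω ∈ Icc (-1) 1 := ae_of_all _ hYbdd
  have hcgf (t : ℝ) : DifferentiableAt ℝ (cgf Y μ) t :=
    (analyticAt_cgf (mem_interior_integrableExpSet_of_mem_Icc hm hb t)).differentiableAt
  have hf_lt {t : ℝ} (h0 : 0 < t) (h1 : t < 1) : f =ᶠ[𝓝 t] cgf Y μ := by
    filter_upwards [Ioo_mem_nhds h0 h1] with s hs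
    rw [hf s hs.1, if_pos hs.2]; rfl
  have hf_gt {t : ℝ} (h1 : 1 < t) : f =ᶠ[𝓝 t] fun s ↦ cgf Y μ s - s := by
    filter_upwards [Ioi_mem_nhds h1] with s hs
    rw [hf s (one_pos.trans hs), if_neg hs.le.not_gt]; rfl
  obtain ⟨C, hC⟩ := exists_one_sub_deriv_cgf_le_div_log_sq hm hb hκ hYlow
  refine ⟨fun t ⟨h0, h1⟩ ↦ ?_, max 2 C, by positivity, fun t h0 h1 ↦ ?_, fun t h1 ↦ ?_⟩
  · rcases lt_or_gt_of_ne h1 with h1 | h1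
    · exact (hcgf t).congr_of_eventuallyEq (hf_lt h0 h1)
    · exact ((hcgf t).sub differentiableAt_id).congr_of_eventuallyEq (hf_gt h1)
  · rw [(hf_lt h0 h1).deriv_eq]
    calc |deriv (cgf Y μ) t| ≤ 2 * t :=
          (abs_deriv_cgf_le_two_mul_abs hm hb hYmean (by rw [abs_of_pos h0]; exact h1.le)).trans_eq
            (by rw [abs_of_pos h0])
      _ ≤ max 2 C * t := by gcongr; exact le_max_left _ _
  · have hle : deriv (cgf Y μ) t ≤ 1 := (abs_le.1 (abs_deriv_cgf_le_one hm hb)).2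
    rw [(hf_gt h1).deriv_eq, deriv_fun_sub (hcgf t) differentiableAt_fun_id, deriv_id'',
      abs_sub_comm, abs_of_nonneg (by linarith)]
    exact (hC t h1).trans (by gcongr; exact le_max_right _ _)

/-- Under the same hypotheses as Statement 7, the function `f` is differentiable
on `(0,∞) \ {1}` with `f'(t) ≪ t` for `0 < t < 1` and `f'(t) ≪ 1/(log 2t)²` for `t > 1`. -/
theorem stmt_8 {Ω : Type*} [MeasurableSpace Ω] (μ : Measure Ω) [IsProbabilityMeasure μ]
    (Y : Ω → ℝ) (hYmeas : Measurable Y) (hYbdd : ∀ ω, Y ω ∈ Set.Icc (-1 : ℝ) 1)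
    (hYmean : ∫ ω, Y ω ∂μ = 0)
    (c κ : ℝ) (hc : 0 < c) (hκ : 0 < κ)
    (hYlow : ∀ t : ℝ, 1 ≤ t →
      κ * Real.exp (-c * Real.exp (Real.sqrt t)) ≤ (μ {ω | 1 - 1 / t < Y ω}).toReal)
    (f : ℝ → ℝ)
    (hf : ∀ t : ℝ, 0 < t →
      f t = if t < 1 then Real.log (∫ ω, Real.exp (t * Y ω) ∂μ)
            else Real.log (∫ ω, Real.exp (t * Y ω) ∂μ) - t) :
    (∀ t ∈ Set.Ioi (0 : ℝ) \ {1}, DifferentiableAt ℝ f t) ∧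
    ∃ C > 0,
      (∀ t : ℝ, 0 < t → t < 1 → |deriv f t| ≤ C * t) ∧
      (∀ t : ℝ, 1 < t → |deriv f t| ≤ C / (Real.log (2 * t)) ^ 2) :=
  stmt_8_general μ Y hYmeas hYbdd hYmean c κ hκ hYlow f hf
end

section
/- Let {X(n)}_{q_n ≤ Q} be random variables with |X(n)| ≤ 1 and {Y(n)}_{q_n ≤ Q} be random variables with |Y(n)| ≤ 1, such that for all ℓ ≤ L and all choices n_1, ..., n_ℓ of indices, E(X(n_1)···X(n_ℓ)) = E(Y(n_1)···Y(n_ℓ)) + O(e^{−L}). Set H_X(Q) = ∑_{q_n ≤ Q} X(n)/q_n, H_Y(Q) = ∑_{q_n ≤ Q} Y(n)/q_n, and H(Q) = ∑_{q_n ≤ Q} 1/q_n. Then for all complex s with |s| ≤ L/(10 H(Q)), one has E(e^{s H_X(Q)}) = E(e^{s H_Y(Q)}) + O(e^{−L/2}). -/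
open Real MeasureTheory Finset

/-!
Truncate both exponentials at order `N = ⌈L⌉₊`. Since `|s H_X| ≤ |s| H ≤ L/10`, the tail of the
exponential series is at most `2 (L/10)^N / N! ≤ 2 e^{-L}` (Stirling in the form `N^N/N! ≤ e^N`,
and `e² ≤ 10`). The truncated series differ by `∑_{k<N} |s|^k/k! |E H_X^k - E H_Y^k|`; expanding
the `k`-th powers into products of the `X(n)/q_n` bounds each moment difference by `C₁ e^{-L} H^k`,
so the middle term is at most `C₁ e^{-L} e^{|s| H} ≤ C₁ e^{-L/2}`.
-/

lemma pow_div_factorial_le_exp_neg {x L : ℝ} {N : ℕ} (hx : 0 ≤ x) (hxL : x ≤ L / 10)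
    (hLN : L ≤ N) : x ^ N / N.factorial ≤ exp (-L) := by
  have he : exp 1 / 10 ≤ exp (-1) := by
    rw [exp_neg, div_le_iff₀ (by norm_num), le_inv_mul_iff₀ (exp_pos 1)]
    nlinarith [exp_pos 1, exp_one_lt_d9]
  calc x ^ N / N.factorial ≤ ((N : ℝ) / 10) ^ N / N.factorial := by gcongr; linarith
    _ = (N : ℝ) ^ N / N.factorial * (1 / 10) ^ N := by ring
    _ ≤ exp N * (1 / 10) ^ N := by gcongr; exact pow_div_factorial_le_exp _ N.cast_nonneg N
    _ = (exp 1 / 10) ^ N := by rw [← exp_one_pow]; ring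
    _ ≤ exp (-1) ^ N := by gcongr
    _ = exp (-N) := by rw [← exp_nat_mul]; ring_nf
    _ ≤ exp (-L) := by gcongr

lemma norm_cexp_sub_sum_range_ceil_le {z : ℂ} {L : ℝ} (hL : 0 < L) (hz : ‖z‖ ≤ L / 10) :
    ‖Complex.exp z - ∑ k ∈ range ⌈L⌉₊, z ^ k / k.factorial‖ ≤ 2 * exp (-L) := by
  have hLN : L ≤ ⌈L⌉₊ := Nat.le_ceil L
  have hratio : ‖z‖ / (⌈L⌉₊.succ : ℝ) ≤ 1 / 2 := by
    rw [div_le_iff₀ (by positivity)]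
    push_cast
    linarith
  calc _ ≤ ‖z‖ ^ ⌈L⌉₊ / (⌈L⌉₊.factorial : ℝ) * 2 := Complex.exp_bound' hratio
    _ ≤ 2 * exp (-L) := by
      rw [mul_comm]
      gcongr
      exact pow_div_factorial_le_exp_neg (norm_nonneg z) hz hLN

lemma abs_sum_div_le_sum_one_div {ι : Type*} (t : Finset ι) {x q : ι → ℝ}
    (hq : ∀ i ∈ t, 0 < q i) (hx : ∀ i ∈ t, |x i| ≤ 1) :
    |∑ i ∈ t, x i / q i| ≤ ∑ i ∈ t, 1 / q i := by
  refine (Finset.abs_sum_le_sum_abs _ _).trans (Finset.sum_le_sum fun i hi => ?_)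
  rw [abs_div, abs_of_pos (hq i hi)]
  exact div_le_div_of_nonneg_right (hx i hi) (hq i hi).le

section Moments

variable {Ω : Type*} [MeasurableSpace Ω] {μ : Measure Ω}

lemma integrable_prod_of_abs_le_one [IsFiniteMeasure μ] {κ : Type*} (t : Finset κ)
    {f : κ → Ω → ℝ} (hm : ∀ i ∈ t, AEStronglyMeasurable (f i) μ)
    (hb : ∀ i ∈ t, ∀ ω, |f i ω| ≤ 1) : Integrable (fun ω => ∏ i ∈ t, f i ω) μ := by
  refine .of_bound (t.aestronglyMeasurable_fun_prod hm) 1 (ae_of_all _ fun ω => ?_)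
  rw [Real.norm_eq_abs, Finset.abs_prod]
  exact Finset.prod_le_one (fun i _ => abs_nonneg _) fun i hi => hb i hi ω

variable {ι : Type*} [Fintype ι] {q : ι → ℝ} {k : ℕ}

lemma integral_sum_div_pow {Z : ι → Ω → ℝ}
    (hZ : ∀ n : Fin k → ι, Integrable (fun ω => ∏ j, Z (n j) ω) μ) :
    ∫ ω, (∑ i, Z i ω / q i) ^ k ∂μ
      = ∑ n : Fin k → ι, (∫ ω, ∏ j, Z (n j) ω ∂μ) / ∏ j, q (n j) := by
  have hexpand (ω : Ω) :
      (∑ i, Z i ω / q i) ^ k = ∑ n : Fin k → ι, (∏ j, Z (n j) ω) / ∏ j, q (n j) := by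
    simp only [Finset.sum_pow', Fintype.piFinset_univ, Finset.prod_div_distrib]
  simp only [hexpand]
  rw [integral_finsetSum _ fun n _ => (hZ n).div_const _]
  simp only [integral_div]

lemma abs_integral_sum_div_pow_sub_le (hq : ∀ i, 0 < q i) {X Y : ι → Ω → ℝ} {ε : ℝ}
    (hX : ∀ n : Fin k → ι, Integrable (fun ω => ∏ j, X (n j) ω) μ)
    (hY : ∀ n : Fin k → ι, Integrable (fun ω => ∏ j, Y (n j) ω) μ)
    (hmom : ∀ n : Fin k → ι, |(∫ ω, ∏ j, X (n j) ω ∂μ) - ∫ ω, ∏ j, Y (n j) ω ∂μ| ≤ ε) :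
    |(∫ ω, (∑ i, X i ω / q i) ^ k ∂μ) - ∫ ω, (∑ i, Y i ω / q i) ^ k ∂μ|
      ≤ ε * (∑ i, 1 / q i) ^ k := by
  rw [integral_sum_div_pow hX, integral_sum_div_pow hY, ← Finset.sum_sub_distrib]
  have hpow : (∑ i, 1 / q i) ^ k = ∑ n : Fin k → ι, 1 / ∏ j, q (n j) := by
    simp only [Finset.sum_pow', Fintype.piFinset_univ, Finset.prod_div_distrib, prod_const_one]
  rw [hpow, Finset.mul_sum]
  refine (Finset.abs_sum_le_sum_abs _ _).trans (Finset.sum_le_sum fun n _ => ?_)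
  have hQ : 0 < ∏ j, q (n j) := Finset.prod_pos fun j _ => hq (n j)
  rw [div_sub_div_same, abs_div, abs_of_pos hQ, mul_one_div]
  exact div_le_div_of_nonneg_right (hmom n) hQ.le

end Moments

lemma norm_sum_range_sub_le_mul_exp (s : ℂ) (N : ℕ) {a b : ℕ → ℝ} {ε B : ℝ} (hε : 0 ≤ ε)
    (hB : 0 ≤ B) (hab : ∀ k < N, |a k - b k| ≤ ε * B ^ k) :
    ‖∑ k ∈ range N, s ^ k / k.factorial * a k - ∑ k ∈ range N, s ^ k / k.factorial * b k‖
      ≤ ε * exp (‖s‖ * B) := by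
  rw [← Finset.sum_sub_distrib]
  calc _ ≤ ∑ k ∈ range N, ‖s‖ ^ k / k.factorial * (ε * B ^ k) := by
        refine (norm_sum_le _ _).trans (Finset.sum_le_sum fun k hk => ?_)
        rw [← mul_sub, ← Complex.ofReal_sub, norm_mul, norm_div, norm_pow, Complex.norm_natCast,
          Complex.norm_real, Real.norm_eq_abs]
        gcongr
        exact hab k (Finset.mem_range.1 hk)
    _ = ε * ∑ k ∈ range N, (‖s‖ * B) ^ k / k.factorial := by
        rw [Finset.mul_sum]
        refine Finset.sum_congr rfl fun k _ => ?_
        ring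
    _ ≤ ε * exp (‖s‖ * B) := by
        gcongr
        exact Real.sum_le_exp_of_nonneg (by positivity) N

lemma norm_integral_cexp_sub_sum_moments_le {Ω : Type*} [MeasurableSpace Ω] {μ : Measure Ω}
    [IsProbabilityMeasure μ] {H : Ω → ℝ} (hH : AEStronglyMeasurable H μ) {B L : ℝ} (hL : 0 < L)
    (hHB : ∀ ω, |H ω| ≤ B) {s : ℂ} (hs : ‖s‖ * B ≤ L / 10) :
    ‖(∫ ω, Complex.exp (s * H ω) ∂μ)
        - ∑ k ∈ range ⌈L⌉₊, s ^ k / k.factorial * ((∫ ω, H ω ^ k ∂μ : ℝ) : ℂ)‖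
      ≤ 2 * exp (-L) := by
  have harg : ∀ ω, ‖s * H ω‖ ≤ L / 10 := fun ω => by
    rw [norm_mul, Complex.norm_real, Real.norm_eq_abs]
    exact (mul_le_mul_of_nonneg_left (hHB ω) (norm_nonneg s)).trans hs
  have hexp : Integrable (fun ω => Complex.exp (s * H ω)) μ :=
    .of_bound (Complex.continuous_exp.comp_aestronglyMeasurable
        ((Complex.continuous_ofReal.comp_aestronglyMeasurable hH).const_mul s))
      (exp (L / 10)) (ae_of_all _ fun ω =>
        (Complex.norm_exp_le_exp_norm _).trans (exp_le_exp.2 (harg ω)))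
  have hterm : ∀ k, Integrable (fun ω => s ^ k / k.factorial * ((H ω ^ k : ℝ) : ℂ)) μ :=
    fun k => ((Integrable.of_bound (hH.pow k) (B ^ k) (ae_of_all _ fun ω => by
      rw [Pi.pow_apply, norm_pow, Real.norm_eq_abs]
      exact pow_le_pow_left₀ (abs_nonneg _) (hHB ω) k)).ofReal).const_mul _
  have hrw : ∀ ω k, (s * H ω) ^ k / k.factorial = s ^ k / k.factorial * ((H ω ^ k : ℝ) : ℂ) :=
    fun ω k => by push_cast; ring
  have hpoly : ∑ k ∈ range ⌈L⌉₊, s ^ k / k.factorial * ((∫ ω, H ω ^ k ∂μ : ℝ) : ℂ)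
      = ∫ ω, ∑ k ∈ range ⌈L⌉₊, (s * H ω) ^ k / k.factorial ∂μ := by
    simp only [hrw]
    rw [integral_finsetSum _ fun k _ => hterm k]
    exact Finset.sum_congr rfl fun k _ => by rw [integral_const_mul, integral_complex_ofReal]
  rw [hpoly, ← integral_sub hexp (integrable_finsetSum _ fun k _ => ?_)]
  · calc _ ≤ 2 * exp (-L) * μ.real Set.univ := norm_integral_le_of_norm_le_const
          (ae_of_all _ fun ω => norm_cexp_sub_sum_range_ceil_le hL (harg ω))
      _ = 2 * exp (-L) := by simp
  · simpa only [hrw] using hterm k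

/-- If bounded random variables `X(n)`, `Y(n)` have all moments up to order `L`
equal up to `O(e^{-L})`, then the moment generating functions of `H_X(Q) = ∑ X(n)/qₙ` and
`H_Y(Q) = ∑ Y(n)/qₙ` agree up to `O(e^{-L/2})` for `|s| ≤ L/(10 H(Q))`. -/
theorem stmt_10 : ∀ C₁ > (0 : ℝ), ∃ C₂ > (0 : ℝ),
    ∀ (ι : Type) [Fintype ι] (Ω : Type) [MeasurableSpace Ω] (μ : Measure Ω),
      IsProbabilityMeasure μ →
      ∀ (q : ι → ℝ), (∀ i, 1 ≤ q i) →
      ∀ (X Y : ι → Ω → ℝ), (∀ i, Measurable (X i)) → (∀ i, Measurable (Y i)) →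
        (∀ i ω, |X i ω| ≤ 1) → (∀ i ω, |Y i ω| ≤ 1) →
      ∀ L : ℝ, 0 < L →
        (∀ ℓ : ℕ, (ℓ : ℝ) ≤ L → ∀ n : Fin ℓ → ι,
          |(∫ ω, ∏ j, X (n j) ω ∂μ) - ∫ ω, ∏ j, Y (n j) ω ∂μ| ≤ C₁ * Real.exp (-L)) →
      ∀ s : ℂ, ‖s‖ ≤ L / (10 * ∑ i, 1 / q i) →
        ‖(∫ ω, Complex.exp (s * ((∑ i, X i ω / q i : ℝ))) ∂μ)
            - ∫ ω, Complex.exp (s * ((∑ i, Y i ω / q i : ℝ))) ∂μ‖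
          ≤ C₂ * Real.exp (-L / 2) := by
  intro C₁ hC₁
  refine ⟨C₁ + 4, by positivity, ?_⟩
  intro ι _ Ω _ μ _ q hq X Y hmX hmY hbX hbY L hL hmom s hs
  have hq0 : ∀ i, 0 < q i := fun i => one_pos.trans_le (hq i)
  have hH0 : 0 ≤ ∑ i, 1 / q i := sum_nonneg fun i _ => (one_div_pos.2 (hq0 i)).le
  have hsH : ‖s‖ * ∑ i, 1 / q i ≤ L / 10 := by
    linarith [mul_le_of_le_div₀ hL.le (mul_nonneg (by norm_num) hH0) hs]
  have htail (Z : ι → Ω → ℝ) (hm : ∀ i, Measurable (Z i)) (hb : ∀ i ω, |Z i ω| ≤ 1) :=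
    norm_integral_cexp_sub_sum_moments_le (μ := μ)
      (Finset.measurable_sum _ fun i _ => (hm i).div_const (q i)).aestronglyMeasurable hL
      (fun ω => abs_sum_div_le_sum_one_div _ (fun i _ => hq0 i) fun i _ => hb i ω) hsH
  have hprod (Z : ι → Ω → ℝ) (hm : ∀ i, Measurable (Z i)) (hb : ∀ i ω, |Z i ω| ≤ 1) (k : ℕ)
      (n : Fin k → ι) : Integrable (fun ω => ∏ j, Z (n j) ω) μ :=
    integrable_prod_of_abs_le_one _ (fun j _ => (hm (n j)).aestronglyMeasurable) fun j _ => hb (n j)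
  have hmid := norm_sum_range_sub_le_mul_exp s ⌈L⌉₊ (by positivity) hH0
    fun k hk => abs_integral_sum_div_pow_sub_le hq0 (hprod X hmX hbX k) (hprod Y hmY hbY k)
      (hmom k (Nat.lt_ceil.1 hk).le)
  have hdecay : exp (-L) * exp (‖s‖ * ∑ i, 1 / q i) ≤ exp (-L / 2) := by
    rw [← exp_add]; exact exp_le_exp.2 (by linarith)
  have hL2 : exp (-L) ≤ exp (-L / 2) := exp_le_exp.2 (by linarith)
  refine (norm_sub_le_norm_sub_add_norm_sub _ _ _).trans
    ((add_le_add
      ((norm_sub_le_norm_sub_add_norm_sub _ _ _).trans (add_le_add (htail X hmX hbX) hmid))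
      ((norm_sub_rev _ _).trans_le (htail Y hmY hbY))).trans ?_)
  linarith [mul_le_mul_of_nonneg_left hdecay hC₁.le]
end

section
/- Let Φ: ℝ → [0,1] be non-increasing with Φ(t) = 1 for t sufficiently small and Φ(t) = 0 for t > M (some finite M), and let K(u) = log(u ∫_{−∞}^{∞} e^{ut} Φ(t) dt) for u > 0. Suppose that for parameters s > 0, V ∈ ℝ, Δ > 0 with sΔ = o of the main term, the two tail bounds ∫_{V+Δ}^∞ e^{st}Φ(t)dt ≤ ε ∫_{−∞}^∞ e^{st}Φ(t)dt and ∫_{−∞}^{V−Δ} e^{st}Φ(t)dt ≤ ε ∫_{−∞}^∞ e^{st}Φ(t)dt hold with ε ≤ 1/4. Then e^{sV + O(sΔ)} Φ(V+Δ) ≤ ∫_{V−Δ}^{V+Δ} e^{st}Φ(t)dt ≤ e^{sV + O(sΔ)} Φ(V−Δ), and consequently Φ(V+Δ) ≤ e^{−sV + K(s) + O(sΔ)} ≤ Φ(V−Δ) up to the stated multiplicative factors. -/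
open Real MeasureTheory

/-!
Since `Φ` is non-increasing and `t ↦ e^{st}` increasing, on `[V - Δ, V + Δ]` the integrand
`e^{st} Φ(t)` lies between `e^{s(V-Δ)} Φ(V+Δ)` and `e^{s(V+Δ)} Φ(V-Δ)`, which sandwiches the
central integral. That integral is at most the full integral `I = e^{K(s)} / s` and, because the
two tails carry at most `2ε ≤ 1/2` of the mass, at least `I / 2`; solving for `Φ(V ± Δ)` gives
the bounds in terms of `K(s)`.
-/

theorem integrable_exp_mul_mul_of_eq_zero_of_gt {Φ : ℝ → ℝ} {s C M : ℝ} (hs : 0 < s)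
    (hΦ : AEStronglyMeasurable Φ) (hbdd : ∀ t, ‖Φ t‖ ≤ C) (hzero : ∀ t > M, Φ t = 0) :
    Integrable fun t => exp (s * t) * Φ t := by
  have hIic : IntegrableOn (fun t => exp (s * t) * Φ t) (Set.Iic M) :=
    (integrableOn_exp_mul_Iic hs M).mul_bdd hΦ.restrict (Filter.Eventually.of_forall hbdd)
  have hIoi : IntegrableOn (fun t => exp (s * t) * Φ t) (Set.Ioi M) :=
    integrableOn_zero.congr_fun (fun t ht => by simp [hzero t ht]) measurableSet_Ioi
  rw [← integrableOn_univ, ← Set.Iic_union_Ioi (a := M)]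
  exact hIic.union hIoi

theorem integral_pos_of_pos_on_Iic {f : ℝ → ℝ} {t₀ : ℝ} (hf : Integrable f) (hnonneg : 0 ≤ f)
    (hpos : ∀ t ≤ t₀, 0 < f t) : 0 < ∫ t, f t := by
  rw [integral_pos_iff_support_of_nonneg hnonneg hf]
  calc (0 : ENNReal) < volume (Set.Iic t₀) := by simp
    _ ≤ volume (Function.support f) :=
      measure_mono fun t ht => (hpos t ht).ne'

theorem integral_Iio_add_intervalIntegral_add_integral_Ioi {f : ℝ → ℝ} (hf : Integrable f)
    (a b : ℝ) :
    (∫ t in Set.Iio a, f t) + (∫ t in a..b, f t) + ∫ t in Set.Ioi b, f t = ∫ t, f t := by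
  rw [add_assoc, intervalIntegral.integral_interval_add_Ioi hf.integrableOn hf.integrableOn,
    ← integral_Ici_eq_integral_Ioi, intervalIntegral.integral_Iio_add_Ici hf.integrableOn
      hf.integrableOn]

theorem half_integral_le_intervalIntegral_of_tails {f : ℝ → ℝ} {a b ε : ℝ} (hf : Integrable f)
    (hI : 0 ≤ ∫ t, f t) (hε : ε ≤ 1 / 4)
    (hleft : (∫ t in Set.Iio a, f t) ≤ ε * ∫ t, f t)
    (hright : (∫ t in Set.Ioi b, f t) ≤ ε * ∫ t, f t) :
    (∫ t, f t) / 2 ≤ ∫ t in a..b, f t := by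
  have := integral_Iio_add_intervalIntegral_add_integral_Ioi hf a b
  nlinarith

section Sandwich

variable {Φ : ℝ → ℝ} {s a b : ℝ}

theorem exp_mul_mul_le_intervalIntegral_exp_mul_mul (hΦ : Antitone Φ) (hs : 0 ≤ s)
    (hΦb : 0 ≤ Φ b) (hab : a ≤ b) :
    exp (s * a) * (b - a) * Φ b ≤ ∫ t in a..b, exp (s * t) * Φ t := by
  have hint : IntervalIntegrable (fun t => exp (s * t) * Φ t) volume a b :=
    hΦ.intervalIntegrable.continuousOn_mul (by fun_prop)
  calc exp (s * a) * (b - a) * Φ b = ∫ _ in a..b, exp (s * a) * Φ b := by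
        rw [intervalIntegral.integral_const, smul_eq_mul]; ring
    _ ≤ ∫ t in a..b, exp (s * t) * Φ t :=
      intervalIntegral.integral_mono_on hab intervalIntegrable_const hint fun t ht =>
        mul_le_mul (exp_le_exp.2 (by nlinarith [ht.1])) (hΦ ht.2) hΦb (exp_pos _).le

theorem intervalIntegral_exp_mul_mul_le_exp_mul_mul (hΦ : Antitone Φ) (hs : 0 ≤ s)
    (hΦ0 : ∀ t, 0 ≤ Φ t) (hab : a ≤ b) :
    ∫ t in a..b, exp (s * t) * Φ t ≤ exp (s * b) * (b - a) * Φ a := by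
  have hint : IntervalIntegrable (fun t => exp (s * t) * Φ t) volume a b :=
    hΦ.intervalIntegrable.continuousOn_mul (by fun_prop)
  calc ∫ t in a..b, exp (s * t) * Φ t ≤ ∫ _ in a..b, exp (s * b) * Φ a :=
      intervalIntegral.integral_mono_on hab hint intervalIntegrable_const fun t ht =>
        mul_le_mul (exp_le_exp.2 (by nlinarith [ht.2])) (hΦ ht.1) (hΦ0 t) (exp_pos _).le
    _ = exp (s * b) * (b - a) * Φ a := by
      rw [intervalIntegral.integral_const, smul_eq_mul]; ring

end Sandwich

theorem intervalIntegral_le_integral_of_nonneg {f : ℝ → ℝ} {a b : ℝ} (hf : Integrable f)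
    (hnonneg : 0 ≤ f) (hab : a ≤ b) : ∫ t in a..b, f t ≤ ∫ t, f t := by
  rw [intervalIntegral.integral_of_le hab]
  exact setIntegral_le_integral hf (Filter.Eventually.of_forall hnonneg)

section SolveForΦ

variable {s I d x y : ℝ}

theorem exp_log_mul_sub (hs : 0 < s) (hI : 0 < I) :
    exp (log (s * I) - x) = s * I / exp x := by
  rw [exp_sub, exp_log (mul_pos hs hI)]

theorem le_exp_log_mul_sub_div (hs : 0 < s) (hd : 0 < d) (hI : 0 < I)
    (h : exp x * d * y ≤ I) : y ≤ exp (log (s * I) - x) / (s * d) := by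
  rw [exp_log_mul_sub hs hI, div_div, le_div_iff₀ (by positivity)]
  nlinarith

theorem exp_log_mul_sub_div_le (hs : 0 < s) (hd : 0 < d) (hI : 0 < I)
    (h : I / 2 ≤ exp x * d * y) : exp (log (s * I) - x) / (2 * s * d) ≤ y := by
  rw [exp_log_mul_sub hs hI, div_div, div_le_iff₀ (by positivity)]
  nlinarith [exp_pos x]

end SolveForΦ

theorem stmt_13_general (Φ : ℝ → ℝ) (hanti : Antitone Φ) (h01 : ∀ t, Φ t ∈ Set.Icc (0 : ℝ) 1)
    (t₀ : ℝ) (hone : ∀ t ≤ t₀, Φ t = 1) (M : ℝ) (hzero : ∀ t > M, Φ t = 0)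
    (s V Δ ε : ℝ) (hs : 0 < s) (hΔ : 0 < Δ) (hε4 : ε ≤ 1 / 4)
    (htail₁ : (∫ t in Set.Ioi (V + Δ), Real.exp (s * t) * Φ t)
      ≤ ε * ∫ t, Real.exp (s * t) * Φ t)
    (htail₂ : (∫ t in Set.Iio (V - Δ), Real.exp (s * t) * Φ t)
      ≤ ε * ∫ t, Real.exp (s * t) * Φ t) :
    (Real.exp (s * V - s * Δ) * (2 * Δ) * Φ (V + Δ)
        ≤ ∫ t in (V - Δ)..(V + Δ), Real.exp (s * t) * Φ t) ∧
    ((∫ t in (V - Δ)..(V + Δ), Real.exp (s * t) * Φ t)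
        ≤ Real.exp (s * V + s * Δ) * (2 * Δ) * Φ (V - Δ)) ∧
    (Φ (V + Δ)
        ≤ Real.exp (Real.log (s * ∫ t, Real.exp (s * t) * Φ t) - s * V + s * Δ)
          / (2 * s * Δ)) ∧
    (Real.exp (Real.log (s * ∫ t, Real.exp (s * t) * Φ t) - s * V - s * Δ) / (4 * s * Δ)
        ≤ Φ (V - Δ)) := by
  have hnonneg : 0 ≤ fun t => exp (s * t) * Φ t := fun t => mul_nonneg (exp_pos _).le (h01 t).1
  have hint : Integrable fun t => exp (s * t) * Φ t :=
    integrable_exp_mul_mul_of_eq_zero_of_gt hs hanti.measurable.aestronglyMeasurable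
      (fun t => by simpa [abs_of_nonneg (h01 t).1] using (h01 t).2) hzero
  have hI : 0 < ∫ t, exp (s * t) * Φ t :=
    integral_pos_of_pos_on_Iic (t₀ := t₀) hint hnonneg fun t ht => by simp [hone t ht, exp_pos]
  have hab : V - Δ ≤ V + Δ := by linarith
  have hlower := exp_mul_mul_le_intervalIntegral_exp_mul_mul hanti hs.le (h01 (V + Δ)).1 hab
  have hupper := intervalIntegral_exp_mul_mul_le_exp_mul_mul hanti hs.le (fun t => (h01 t).1) hab
  rw [show V + Δ - (V - Δ) = 2 * Δ by ring, mul_sub] at hlower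
  rw [show V + Δ - (V - Δ) = 2 * Δ by ring, mul_add] at hupper
  have hcentral := half_integral_le_intervalIntegral_of_tails hint hI.le hε4 htail₂ htail₁
  refine ⟨hlower, hupper, ?_, ?_⟩
  · rw [sub_add, show 2 * s * Δ = s * (2 * Δ) by ring]
    exact le_exp_log_mul_sub_div hs (by positivity) hI
      (hlower.trans (intervalIntegral_le_integral_of_nonneg hint hnonneg hab))
  · rw [sub_sub, show 4 * s * Δ = 2 * s * (2 * Δ) by ring]
    exact exp_log_mul_sub_div_le hs (by positivity) hI (hcentral.trans hupper)

/-- The saddle point sandwich: for a non-increasing `Φ : ℝ → [0,1]` which is `1`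
near `-∞` and `0` beyond `M`, with tail bounds at the saddle point `s`, the central integral
`∫_{V-Δ}^{V+Δ} e^{st}Φ(t)dt` is squeezed between `e^{sV+O(sΔ)}Φ(V±Δ)`, and consequently
`Φ(V+Δ) ≤ e^{-sV+K(s)+O(sΔ)} ≤ Φ(V-Δ)` up to the stated multiplicative factors, where
`K(u) = log(u ∫ e^{ut}Φ(t)dt)`. -/
theorem stmt_13 (Φ : ℝ → ℝ) (hanti : Antitone Φ) (h01 : ∀ t, Φ t ∈ Set.Icc (0 : ℝ) 1)
    (t₀ : ℝ) (hone : ∀ t ≤ t₀, Φ t = 1) (M : ℝ) (hzero : ∀ t > M, Φ t = 0)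
    (s V Δ ε : ℝ) (hs : 0 < s) (hΔ : 0 < Δ) (hε : 0 < ε) (hε4 : ε ≤ 1 / 4)
    (htail₁ : (∫ t in Set.Ioi (V + Δ), Real.exp (s * t) * Φ t)
      ≤ ε * ∫ t, Real.exp (s * t) * Φ t)
    (htail₂ : (∫ t in Set.Iio (V - Δ), Real.exp (s * t) * Φ t)
      ≤ ε * ∫ t, Real.exp (s * t) * Φ t) :
    (Real.exp (s * V - s * Δ) * (2 * Δ) * Φ (V + Δ)
        ≤ ∫ t in (V - Δ)..(V + Δ), Real.exp (s * t) * Φ t) ∧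
    ((∫ t in (V - Δ)..(V + Δ), Real.exp (s * t) * Φ t)
        ≤ Real.exp (s * V + s * Δ) * (2 * Δ) * Φ (V - Δ)) ∧
    (Φ (V + Δ)
        ≤ Real.exp (Real.log (s * ∫ t, Real.exp (s * t) * Φ t) - s * V + s * Δ)
          / (2 * s * Δ)) ∧
    (Real.exp (Real.log (s * ∫ t, Real.exp (s * t) * Φ t) - s * V - s * Δ) / (4 * s * Δ)
        ≤ Φ (V - Δ)) :=
  stmt_13_general Φ hanti h01 t₀ hone M hzero s V Δ ε hs hΔ hε4 htail₁ htail₂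
end

section
/- Let q be a large prime, k a positive integer, and a, b nonnegative integers with b ≤ a. If N = p_1···p_ℓ is a product of primes (with multiplicity) written as q_1^{a_1}···q_r^{a_r} for distinct primes q_1,...,q_r, and if the harmonic-weighted Petersson average satisfies (1/|H_k|_h) ∑^h_{f∈H_k} λ_f(m) = 1_{m=1} + O(k^{−5/6}) for all m ≤ k^2/10, and if N ≤ k^2/10, then (1/|H_k|_h) ∑^h_{f∈H_k} ∏_{j=1}^ℓ (λ_f(p_j)/2) = ∏_{j=1}^r C_{a_j}(0) + O(k^{−5/6} 4^ℓ), where C_a(0) = (2/π)∫_0^π cos(θ)^a sin^2 θ dθ. -/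
open Real Finset

/-- The Chebyshev/Sato–Tate coefficient `C_a(b)`; in particular
`C_a(0) = (2/π)∫_0^π cos(θ)^a sin²θ dθ`. -/
noncomputable def chebCoeff (a b : ℕ) : ℝ :=
  (2 / π) * ∫ θ in (0:ℝ)..π, (Real.cos θ) ^ a * Real.sin θ * Real.sin ((b + 1) * θ)

set_option linter.unusedSectionVars false



noncomputable def eC : ℕ → ℕ → ℝ
  | 0, 0 => 1
  | 0, _ + 1 => 0
  | a + 1, 0 => eC a 1 / 2
  | a + 1, b + 1 => (eC a b + eC a (b + 2)) / 2

lemma eC_nonneg : ∀ a b, 0 ≤ eC a b := by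
  intro a
  induction a with
  | zero => intro b; cases b <;> simp [eC]
  | succ a ih =>
    intro b
    cases b with
    | zero => simpa [eC] using div_nonneg (ih 1) (by norm_num)
    | succ b => exact div_nonneg (add_nonneg (ih b) (ih (b+2))) (by norm_num)

lemma eC_eq_zero : ∀ a b, a < b → eC a b = 0 := by
  intro a
  induction a with
  | zero => intro b hb; cases b with
    | zero => omega
    | succ b => simp [eC]
  | succ a ih =>
    intro b hb
    cases b with
    | zero => omega
    | succ b =>
      have h1 : eC a b = 0 := ih b (by omega)
      have h2 : eC a (b + 2) = 0 := ih (b+2) (by omega)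
      simp [eC, h1, h2]

lemma keyLem (x : ℝ) (u : ℕ → ℝ) (h0 : x * u 0 = u 1 / 2)
    (hs : ∀ b, x * u (b + 1) = (u (b + 2) + u b) / 2) :
    ∀ a, x ^ a * u 0 = ∑ b ∈ range (a + 1), eC a b * u b := by
  intro a
  induction a with
  | zero => simp [eC]
  | succ a ih =>
    have hred : ∀ k : ℕ, k + 1 + 1 = k + 2 := fun _ => rfl
    have L : x ^ (a+1) * u 0 = ∑ b ∈ range (a+1), eC a b * (x * u b) := by
      rw [pow_succ, mul_comm (x^a) x, mul_assoc, ih, Finset.mul_sum]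
      exact Finset.sum_congr rfl fun b _ => by ring
    rw [L]
    have hL : ∑ b ∈ range (a+1), eC a b * (x * u b)
        = eC a 0 * u 1 / 2 + ((∑ b ∈ range a, eC a (b+1) * u (b+2)) / 2
            + (∑ b ∈ range a, eC a (b+1) * u b) / 2) := by
      rw [Finset.sum_range_succ']
      have : ∀ b ∈ range a, eC a (b+1) * (x * u (b+1))
          = eC a (b+1) * u (b+2) / 2 + eC a (b+1) * u b / 2 := fun b _ => by
        rw [hs b]; ring
      rw [Finset.sum_congr rfl this, Finset.sum_add_distrib,
          ← Finset.sum_div, ← Finset.sum_div, h0]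
      ring
    have hA : ∑ b ∈ range (a+1), eC a b * u (b+1)
        = eC a 0 * u 1 + ∑ b ∈ range a, eC a (b+1) * u (b+2) := by
      rw [Finset.sum_range_succ']
      simp only [hred, Nat.zero_add]
      ring
    have hB : ∑ b ∈ range (a+1), eC a (b+2) * u (b+1)
        = (∑ b ∈ range a, eC a (b+1) * u b) - eC a 1 * u 0 := by
      have h4 : ∑ b ∈ range (a+2), eC a (b+1) * u b
          = ∑ b ∈ range a, eC a (b+1) * u b := by
        rw [Finset.sum_range_succ, Finset.sum_range_succ,
            eC_eq_zero a (a+1) (by omega), eC_eq_zero a (a+1+1) (by omega)]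
        ring
      have h5 : ∑ b ∈ range (a+2), eC a (b+1) * u b
          = (∑ b ∈ range (a+1), eC a (b+1+1) * u (b+1)) + eC a (0+1) * u 0 := by
        rw [Finset.sum_range_succ']
      simp only [hred, Nat.zero_add] at h5
      linarith [h4, h5]
    have hR : ∑ b ∈ range (a+2), eC (a+1) b * u b
        = (∑ b ∈ range (a+1), (eC a b * u (b+1) / 2 + eC a (b+2) * u (b+1) / 2))
          + eC a 1 / 2 * u 0 := by
      rw [Finset.sum_range_succ']
      have h6 : ∑ b ∈ range (a+1), eC (a+1) (b+1) * u (b+1)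
          = ∑ b ∈ range (a+1), (eC a b * u (b+1) / 2 + eC a (b+2) * u (b+1) / 2) := by
        refine Finset.sum_congr rfl fun b _ => ?_
        have : eC (a+1) (b+1) = (eC a b + eC a (b+2)) / 2 := by simp [eC]
        rw [this]; ring
      have h7 : eC (a+1) 0 = eC a 1 / 2 := by simp [eC]
      rw [h6, h7]
    rw [hL, hR, Finset.sum_add_distrib, ← Finset.sum_div, ← Finset.sum_div, hA, hB]
    ring

lemma sum_eC_eq (a : ℕ) : ∑ b ∈ range (a + 1), eC a b * ((b : ℝ) + 1) = 1 := by
  have := keyLem 1 (fun b => (b : ℝ) + 1) (by norm_num) (fun b => by push_cast; ring) a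
  simpa using this.symm

lemma sum_eC_le_one (a : ℕ) : ∑ b ∈ range (a + 1), eC a b ≤ 1 := by
  rw [← sum_eC_eq a]
  refine Finset.sum_le_sum fun b _ => ?_
  nlinarith [eC_nonneg a b, (Nat.cast_nonneg b : (0:ℝ) ≤ b)]

lemma integral_cos_mul (c : ℝ) (hc : c ≠ 0) :
    ∫ θ in (0:ℝ)..π, Real.cos (c * θ) = Real.sin (c * π) / c := by
  rw [intervalIntegral.integral_comp_mul_left Real.cos hc]
  simp [integral_cos, div_eq_inv_mul]

lemma orth (c : ℕ) :
    (∫ θ in (0:ℝ)..π, Real.sin (((c : ℝ) + 1) * θ) * Real.sin θ)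
      = if c = 0 then π / 2 else 0 := by
  have hid : ∀ θ : ℝ, Real.sin (((c : ℝ) + 1) * θ) * Real.sin θ
      = (Real.cos ((c : ℝ) * θ) - Real.cos (((c : ℝ) + 2) * θ)) / 2 := by
    intro θ
    have h1 : ((c : ℝ) + 2) * θ = ((c : ℝ) + 1) * θ + θ := by ring
    have h2 : (c : ℝ) * θ = ((c : ℝ) + 1) * θ - θ := by ring
    rw [h1, h2, Real.cos_add, Real.cos_sub]
    ring
  rw [intervalIntegral.integral_congr (g := fun θ =>
      (Real.cos ((c : ℝ) * θ) - Real.cos (((c : ℝ) + 2) * θ)) / 2) (fun θ _ => hid θ)]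
  have hint1 : IntervalIntegrable (fun θ => Real.cos ((c : ℝ) * θ))
      MeasureTheory.volume 0 π := (Real.continuous_cos.comp (by continuity)).intervalIntegrable _ _
  have hint2 : IntervalIntegrable (fun θ => Real.cos (((c : ℝ) + 2) * θ))
      MeasureTheory.volume 0 π := (Real.continuous_cos.comp (by continuity)).intervalIntegrable _ _
  rw [intervalIntegral.integral_div, intervalIntegral.integral_sub hint1 hint2]
  have h2 : ∫ θ in (0:ℝ)..π, Real.cos (((c : ℝ) + 2) * θ) = 0 := by
    rw [integral_cos_mul ((c : ℝ) + 2) (by positivity)]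
    have : ((c : ℝ) + 2) * π = ((c + 2 : ℕ) : ℝ) * π := by push_cast; ring
    rw [this, Real.sin_nat_mul_pi]
    simp
  rcases Nat.eq_zero_or_pos c with h | h
  · subst h; simp [h2]
  · have h1 : ∫ θ in (0:ℝ)..π, Real.cos ((c : ℝ) * θ) = 0 := by
      rw [integral_cos_mul (c : ℝ) (by positivity), Real.sin_nat_mul_pi]
      simp
    rw [h1, h2]
    simp [Nat.pos_iff_ne_zero.mp h]

lemma cos_pow_eq (a : ℕ) (θ : ℝ) :
    (Real.cos θ) ^ a * Real.sin θ
      = ∑ b ∈ range (a + 1), eC a b * Real.sin (((b : ℝ) + 1) * θ) := by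
  have := keyLem (Real.cos θ) (fun b => Real.sin (((b : ℝ) + 1) * θ))
    (by
      simp only [Nat.cast_zero, Nat.cast_one]
      rw [show ((0:ℝ) + 1) * θ = θ by ring, show ((1:ℝ) + 1) * θ = 2 * θ by ring,
        Real.sin_two_mul]
      ring)
    (fun b => by
      push_cast
      have h1 : ((b : ℝ) + 2 + 1) * θ = ((b : ℝ) + 1 + 1) * θ + θ := by ring
      have h2 : ((b : ℝ) + 1) * θ = ((b : ℝ) + 1 + 1) * θ - θ := by ring
      rw [h1, h2, Real.sin_add, Real.sin_sub]
      ring) a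
  simpa [show ((0:ℝ)+1) = 1 by norm_num] using this

lemma chebCoeff_eq_eC (a : ℕ) : chebCoeff a 0 = eC a 0 := by
  have hπ : π ≠ 0 := Real.pi_ne_zero
  unfold chebCoeff
  have hcong : ∀ θ ∈ Set.uIcc (0:ℝ) π, (Real.cos θ) ^ a * Real.sin θ * Real.sin (((0:ℕ) + 1) * θ)
      = ∑ b ∈ range (a + 1), eC a b * (Real.sin (((b : ℝ) + 1) * θ) * Real.sin θ) := by
    intro θ _
    rw [show (((0:ℕ):ℝ) + 1) * θ = θ by push_cast; ring, cos_pow_eq a θ, Finset.sum_mul]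
    exact Finset.sum_congr rfl fun b _ => by ring
  rw [intervalIntegral.integral_congr hcong]
  rw [intervalIntegral.integral_finset_sum (fun b _ =>
    (Continuous.intervalIntegrable (by continuity) _ _))]
  have : ∀ b ∈ range (a+1), (∫ θ in (0:ℝ)..π, eC a b * (Real.sin (((b : ℝ) + 1) * θ) * Real.sin θ))
      = eC a b * if b = 0 then π / 2 else 0 := by
    intro b _
    rw [intervalIntegral.integral_const_mul, orth b]
  rw [Finset.sum_congr rfl this]
  have : ∑ b ∈ range (a+1), (eC a b * if b = 0 then π / 2 else 0)
      = eC a 0 * (π / 2) := by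
    rw [Finset.sum_eq_single 0]
    · simp
    · intro b _ hb; simp [hb]
    · intro h; simp at h
  rw [this]
  field_simp

section Hecke
variable (φ : ℕ → ℝ) (h1 : φ 1 = 1)
  (hH : ∀ m n : ℕ, 1 ≤ m → 1 ≤ n →
    φ m * φ n = ∑ d ∈ (Nat.gcd m n).divisors, φ (m * n / d ^ 2))

include hH in
lemma phi_coprime_mul (m n : ℕ) (hm : 1 ≤ m) (hn : 1 ≤ n) (h : Nat.Coprime m n) :
    φ (m * n) = φ m * φ n := by
  rw [hH m n hm hn, Nat.Coprime.gcd_eq_one h]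
  simp

include h1 hH in
lemma phi_prod {ι : Type*} [DecidableEq ι] (s : Finset ι) (g : ι → ℕ)
    (hg : ∀ i ∈ s, 1 ≤ g i)
    (hcop : ∀ i ∈ s, ∀ j ∈ s, i ≠ j → Nat.Coprime (g i) (g j)) :
    φ (∏ i ∈ s, g i) = ∏ i ∈ s, φ (g i) := by
  induction s using Finset.induction_on with
  | empty => simpa using h1
  | @insert i s hi ih =>
    rw [Finset.prod_insert hi, Finset.prod_insert hi]
    have hcop' : Nat.Coprime (g i) (∏ j ∈ s, g j) :=
      Nat.Coprime.prod_right fun j hj =>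
        hcop i (Finset.mem_insert_self i s) j (Finset.mem_insert_of_mem hj)
          (fun h => hi (h ▸ hj))
    rw [phi_coprime_mul φ hH (g i) (∏ j ∈ s, g j)
        (hg i (Finset.mem_insert_self i s))
        (Finset.one_le_prod' fun j hj => hg j (Finset.mem_insert_of_mem hj)) hcop',
      ih (fun j hj => hg j (Finset.mem_insert_of_mem hj))
        (fun a ha b hb hab => hcop a (Finset.mem_insert_of_mem ha) b
          (Finset.mem_insert_of_mem hb) hab)]

include h1 hH in
lemma hecke_pp (q : ℕ) (hq : q.Prime) (b : ℕ) :
    φ q * φ (q ^ (b + 1)) = φ (q ^ (b + 2)) + φ (q ^ b) := by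
  have hgcd : Nat.gcd q (q ^ (b + 1)) = q :=
    Nat.gcd_eq_left (dvd_pow_self q (Nat.succ_ne_zero b))
  have := hH q (q ^ (b + 1)) hq.one_lt.le (Nat.one_le_pow _ _ hq.pos)
  rw [hgcd, hq.divisors] at this
  have hq1 : q ≠ 1 := hq.ne_one
  rw [Finset.sum_insert (by simp [eq_comm, hq1]), Finset.sum_singleton] at this
  have e1 : q * q ^ (b + 1) / 1 ^ 2 = q ^ (b + 2) := by
    rw [one_pow, Nat.div_one, ← pow_succ']
  have e2 : q * q ^ (b + 1) / q ^ 2 = q ^ b := by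
    rw [← pow_succ', Nat.pow_div (by omega) hq.pos]
    congr 1
  rw [e1, e2] at this
  linarith

include h1 hH in
lemma phi_pow_expand (q : ℕ) (hq : q.Prime) (a : ℕ) :
    (φ q / 2) ^ a = ∑ b ∈ range (a + 1), eC a b * φ (q ^ b) := by
  have h0 : (φ q / 2) * φ (q ^ 0) = φ (q ^ 1) / 2 := by
    rw [pow_zero, h1, pow_one]; ring
  have hs : ∀ b, (φ q / 2) * φ (q ^ (b + 1)) = (φ (q ^ (b + 2)) + φ (q ^ b)) / 2 := by
    intro b
    have := hecke_pp φ h1 hH q hq b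
    linarith
  have := keyLem (φ q / 2) (fun b => φ (q ^ b)) h0 hs a
  simpa [h1] using this

end Hecke

/-- If the harmonic-weighted Petersson averages of Hecke eigenvalues satisfy
`E_k(λ_f(m)) = 1_{m=1} + O(k^{-5/6})` for `m ≤ k²/10`, then for `N = p₁⋯ p_ℓ ≤ k²/10` written
as `q₁^{a₁}⋯q_r^{a_r}`, `E_k(∏ λ_f(p_j)/2) = ∏ C_{a_j}(0) + O(k^{-5/6} 4^ℓ)`. -/
theorem stmt_14 : ∀ C₁ > (0 : ℝ), ∃ C₂ > (0 : ℝ),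
    ∀ (F : Type) [Fintype F] (w : F → ℝ) (lam : F → ℕ → ℝ),
      (∀ f, 0 ≤ w f) → 0 < (∑ f, w f) →
      (∀ f, lam f 1 = 1) →
      (∀ f, ∀ m n : ℕ, 1 ≤ m → 1 ≤ n →
        lam f m * lam f n = ∑ d ∈ (Nat.gcd m n).divisors, lam f (m * n / d ^ 2)) →
      ∀ k : ℕ, 1 ≤ k →
      (∀ m : ℕ, 1 ≤ m → (m : ℝ) ≤ (k : ℝ) ^ 2 / 10 →
        |(∑ f, w f * lam f m) / (∑ f, w f) - (if m = 1 then 1 else 0)|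
          ≤ C₁ * (k : ℝ) ^ (-(5 : ℝ) / 6)) →
      ∀ (ℓ : ℕ) (p : Fin ℓ → ℕ), (∀ j, (p j).Prime) →
        ((∏ j, p j : ℕ) : ℝ) ≤ (k : ℝ) ^ 2 / 10 →
        |(∑ f, w f * ∏ j, lam f (p j) / 2) / (∑ f, w f)
            - ∏ r ∈ (∏ j, p j).primeFactors, chebCoeff ((∏ j, p j).factorization r) 0|
          ≤ C₂ * (k : ℝ) ^ (-(5 : ℝ) / 6) * 4 ^ ℓ := by
  intro C₁ hC₁
  refine ⟨C₁, hC₁, ?_⟩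
  intro F _ w lam hw hW h1 hH k hk havg ℓ p hp hNle
  classical
  set N : ℕ := ∏ j, p j with hNdef
  have hN0 : 0 < N := Finset.prod_pos fun j _ => (hp j).pos
  set P : Finset ℕ := N.primeFactors with hPdef
  set A : ℕ → ℕ := fun r => N.factorization r with hAdef
  set W : ℝ := ∑ f, w f with hWdef
  set ε : ℝ := C₁ * (k : ℝ) ^ (-(5 : ℝ) / 6) with hεdef
  have hε0 : 0 ≤ ε := by positivity
  -- the index set and coefficients
  set Pi := P.pi (fun r => range (A r + 1)) with hPidef
  set c : (∀ r ∈ P, ℕ) → ℝ := fun β => ∏ x ∈ P.attach, eC (A x.1) (β x.1 x.2) with hcdef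
  set M : (∀ r ∈ P, ℕ) → ℕ := fun β => ∏ x ∈ P.attach, x.1 ^ (β x.1 x.2) with hMdef
  -- fiberwise regrouping, per f
  have hfiber : ∀ f, (∏ j, lam f (p j) / 2) = ∏ r ∈ P, (lam f r / 2) ^ (A r) := by
    intro f
    have hmem : ∀ j, p j ∈ P := fun j =>
      Nat.mem_primeFactors.mpr ⟨hp j, Finset.dvd_prod_of_mem p (mem_univ j), hN0.ne'⟩
    have hcard : ∀ r, (univ.filter (fun j => p j = r)).card = A r := by
      intro r
      have hfac : N.factorization = ∑ j, (p j).factorization :=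
        Nat.factorization_prod fun j _ => (hp j).pos.ne'
      have : A r = ∑ j, ((p j).factorization) r := by
        show N.factorization r = _
        rw [hfac, Finset.sum_apply']
      rw [this, Finset.card_filter]
      refine Finset.sum_congr rfl fun j _ => ?_
      rw [(hp j).factorization, Finsupp.single_apply]
    rw [← Finset.prod_fiberwise_of_maps_to (fun j _ => hmem j) (fun j => lam f (p j) / 2)]
    refine Finset.prod_congr rfl fun r hr => ?_
    have : ∀ j ∈ univ.filter (fun j => p j = r), lam f (p j) / 2 = lam f r / 2 := by
      intro j hj
      rw [(Finset.mem_filter.mp hj).2]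
    rw [Finset.prod_congr rfl this, Finset.prod_const, hcard r]
  -- expansion per f
  have hexp : ∀ f, (∏ j, lam f (p j) / 2) = ∑ β ∈ Pi, c β * lam f (M β) := by
    intro f
    rw [hfiber f]
    have e1 : ∀ r ∈ P, (lam f r / 2) ^ (A r)
        = ∑ b ∈ range (A r + 1), eC (A r) b * lam f (r ^ b) := fun r hr =>
      phi_pow_expand (lam f) (h1 f) (hH f) r (Nat.prime_of_mem_primeFactors hr) (A r)
    rw [Finset.prod_congr rfl e1, Finset.prod_sum]
    refine Finset.sum_congr rfl fun β hβ => ?_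
    rw [Finset.prod_mul_distrib]
    congr 1
    rw [← phi_prod (lam f) (h1 f) (hH f) P.attach (fun x => x.1 ^ (β x.1 x.2))
      (fun x _ => Nat.one_le_pow _ _ (Nat.prime_of_mem_primeFactors x.2).pos)
      (fun x _ y _ hxy => ((Nat.coprime_primes
        (Nat.prime_of_mem_primeFactors x.2) (Nat.prime_of_mem_primeFactors y.2)).mpr
        (fun h => hxy (Subtype.ext h))).pow _ _)]
  -- properties of M and c
  have hM1 : ∀ β, 1 ≤ M β := fun β =>
    Finset.one_le_prod' fun x _ => Nat.one_le_pow _ _ (Nat.prime_of_mem_primeFactors x.2).pos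
  have hMle : ∀ β ∈ Pi, M β ≤ N := by
    intro β hβ
    have hdvd : M β ∣ N := by
      have h2 : ∏ x ∈ P.attach, x.1 ^ (A x.1) = N := by
        rw [Finset.prod_attach P (fun r => r ^ (A r))]
        exact Nat.factorization_prod_pow_eq_self hN0.ne'
      rw [← h2]
      refine Finset.prod_dvd_prod_of_dvd _ _ fun x _ => pow_dvd_pow _ ?_
      have := Finset.mem_range.mp (Finset.mem_pi.mp hβ x.1 x.2)
      omega
    exact Nat.le_of_dvd hN0 hdvd
  have hc0 : ∀ β, 0 ≤ c β := fun β =>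
    Finset.prod_nonneg fun x _ => eC_nonneg _ _
  have hcsum : ∑ β ∈ Pi, c β ≤ 1 := by
    have : ∑ β ∈ Pi, c β = ∏ r ∈ P, ∑ b ∈ range (A r + 1), eC (A r) b :=
      (Finset.prod_sum P (fun r => range (A r + 1)) (fun r b => eC (A r) b)).symm
    rw [this]
    exact Finset.prod_le_one
      (fun r _ => Finset.sum_nonneg fun b _ => eC_nonneg _ _)
      (fun r _ => sum_eC_le_one (A r))
  -- main term identification
  have hβ₀mem : (fun r (_ : r ∈ P) => 0) ∈ Pi := by
    rw [hPidef, Finset.mem_pi]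
    intro r hr
    simp
  have hmain : ∏ r ∈ P, chebCoeff (A r) 0
      = ∑ β ∈ Pi, c β * (if M β = 1 then 1 else 0) := by
    rw [Finset.sum_eq_single_of_mem (fun r _ => 0) hβ₀mem]
    · have hM0 : M (fun r _ => 0) = 1 := by
        rw [hMdef]; simp
      rw [hM0, if_pos rfl, mul_one, hcdef]
      rw [← Finset.prod_attach P (fun r => chebCoeff (A r) 0)]
      exact Finset.prod_congr rfl fun x _ => chebCoeff_eq_eC (A x.1)
    · intro β hβ hne
      have : M β ≠ 1 := by
        intro hM1'
        apply hne
        funext r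
        funext hr
        by_contra hb
        have hbpos : 0 < β r hr := Nat.pos_of_ne_zero hb
        have hrP : r ∈ P := hr
        have hrprime := Nat.prime_of_mem_primeFactors hrP
        have : r ^ (β r hr) ∣ M β := by
          rw [hMdef]
          exact Finset.dvd_prod_of_mem _ (Finset.mem_attach P ⟨r, hr⟩)
        rw [hM1'] at this
        have h2 := Nat.eq_one_of_dvd_one this
        have h3 : 1 < r ^ (β r hr) := Nat.one_lt_pow hbpos.ne' hrprime.one_lt
        omega
      rw [if_neg this, mul_zero]
  -- assemble
  have hT : (∑ f, w f * ∏ j, lam f (p j) / 2)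
      = ∑ β ∈ Pi, c β * (∑ f, w f * lam f (M β)) := by
    have : ∀ f, w f * ∏ j, lam f (p j) / 2
        = ∑ β ∈ Pi, c β * (w f * lam f (M β)) := by
      intro f
      rw [hexp f, Finset.mul_sum]
      exact Finset.sum_congr rfl fun β _ => by ring
    rw [Finset.sum_congr rfl fun f _ => this f, Finset.sum_comm]
    exact Finset.sum_congr rfl fun β _ => by rw [Finset.mul_sum]
  have hdiv : (∑ f, w f * ∏ j, lam f (p j) / 2) / W
      = ∑ β ∈ Pi, c β * ((∑ f, w f * lam f (M β)) / W) := by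
    rw [hT, Finset.sum_div]
    exact Finset.sum_congr rfl fun β _ => by ring
  rw [hdiv, hmain]
  rw [← Finset.sum_sub_distrib]
  have hbound : ∀ β ∈ Pi,
      |c β * ((∑ f, w f * lam f (M β)) / W) - c β * (if M β = 1 then 1 else 0)| ≤ c β * ε := by
    intro β hβ
    rw [← mul_sub, abs_mul, abs_of_nonneg (hc0 β)]
    refine mul_le_mul_of_nonneg_left ?_ (hc0 β)
    refine havg (M β) (hM1 β) ?_
    calc ((M β : ℕ) : ℝ) ≤ (N : ℝ) := Nat.cast_le.mpr (hMle β hβ)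
    _ ≤ (k : ℝ) ^ 2 / 10 := hNle
  calc |∑ β ∈ Pi, (c β * ((∑ f, w f * lam f (M β)) / W) - c β * (if M β = 1 then 1 else 0))|
      ≤ ∑ β ∈ Pi, |c β * ((∑ f, w f * lam f (M β)) / W) - c β * (if M β = 1 then 1 else 0)| :=
        Finset.abs_sum_le_sum_abs _ _
    _ ≤ ∑ β ∈ Pi, c β * ε := Finset.sum_le_sum hbound
    _ = (∑ β ∈ Pi, c β) * ε := by rw [Finset.sum_mul]
    _ ≤ 1 * ε := mul_le_mul_of_nonneg_right hcsum hε0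
    _ = ε := one_mul ε
    _ ≤ ε * 4 ^ ℓ := le_mul_of_one_le_right hε0 (one_le_pow₀ (by norm_num : (1:ℝ) ≤ 4))
end
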